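/- arXiv:1001.1396 — 5 statements merged into one kernel-verified Lean document; each statement's English description precedes it below -/
import Mathlib

section
/- Suppose (W, W') ∈ ℝ^k × ℝ^k is an exchangeable pair satisfying E(W'|W) = (I_k − Λ)W for an invertible matrix Λ, ‖W − W'‖₂ ≤ K almost surely, and m(θ) = E(e^{θᵗW}) < ∞ for all θ ∈ ℝ^k. Then ‖∇m(θ)‖₂ ≤ (K² ‖θ‖₂ ν₁ / 2) m(θ), where ν₁ = 1/σ₁(Λ) and σ₁(Λ) is the smallest singular value of Λ. -/
open MeasureTheory ProbabilityTheory Real Matrix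

/-- The Euclidean (ℓ²) norm on `Fin k → ℝ`. -/
noncomputable def norm2 {k : ℕ} (x : Fin k → ℝ) : ℝ := Real.sqrt (∑ i, x i ^ 2)

/-- The smallest singular value of a square real matrix: the infimum of `‖Λx‖₂`
over unit vectors `x`. -/
noncomputable def smallestSingularValue {k : ℕ} (Λ : Matrix (Fin k) (Fin k) ℝ) : ℝ :=
  sInf {r | ∃ x : Fin k → ℝ, norm2 x = 1 ∧ r = norm2 (Λ.mulVec x)}

/-!
Write `f = exp (θ ⬝ᵥ W)` and `f' = exp (θ ⬝ᵥ W')`. Conditioning on `W` in the regression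
condition gives `Λ E[W f] = E[f (W - W')]`, and exchangeability turns the right-hand side into
`½ E[(f - f') (W - W')]`. The trapezoid bound `|eᵃ - eᵇ| ≤ |a - b| (eᵃ + eᵇ) / 2` for the convex
function `exp` and Cauchy–Schwarz bound the integrand by `‖θ‖ K² (f + f') / 2`, whose expectation
is `‖θ‖ K² m(θ)` because `f'` and `f` have the same law. Finally `σ₁(Λ) ‖v‖ ≤ ‖Λ v‖`.
-/

theorem Real.sinh_le_mul_cosh {t : ℝ} (ht : 0 ≤ t) : sinh t ≤ t * cosh t := by
  have hmono : MonotoneOn (fun t => t * cosh t - sinh t) (Set.Ici 0) := by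
    refine monotoneOn_of_hasDerivWithinAt_nonneg (convex_Ici 0) (by fun_prop)
      (fun x _ => (((hasDerivAt_id x).mul (hasDerivAt_cosh x)).sub
        (hasDerivAt_sinh x)).hasDerivWithinAt) fun x hx => ?_
    rw [interior_Ici, Set.mem_Ioi] at hx
    have : 0 ≤ x * sinh x := mul_nonneg hx.le (sinh_nonneg_iff.2 hx.le)
    simp only [id, one_mul]
    linarith
  simpa using hmono Set.self_mem_Ici ht ht

theorem Real.abs_exp_sub_exp_le (a b : ℝ) : |exp a - exp b| ≤ |a - b| * (exp a + exp b) / 2 := by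
  wlog hab : b ≤ a with H
  · simpa only [abs_sub_comm, add_comm] using H b a (le_of_not_ge hab)
  set m := (a + b) / 2
  set d := (a - b) / 2
  have hd : 0 ≤ d := by simp only [d]; linarith
  have ha : exp a = exp m * exp d := by rw [← exp_add]; congr 1; ring
  have hb : exp b = exp m * exp (-d) := by rw [← exp_add]; congr 1; ring
  have hsub : exp a - exp b = 2 * exp m * sinh d := by rw [sinh_eq, ha, hb]; ring
  have hadd : (a - b) * (exp a + exp b) / 2 = 2 * exp m * (d * cosh d) := by
    rw [cosh_eq, ha, hb]; ring
  rw [abs_of_nonneg (sub_nonneg.2 hab), abs_of_nonneg (sub_nonneg.2 (exp_le_exp.2 hab)), hsub,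
    hadd]
  exact mul_le_mul_of_nonneg_left (sinh_le_mul_cosh hd) (by positivity)

theorem Real.abs_mul_exp_le (x y : ℝ) : |x| * exp y ≤ exp (y + x) + exp (y - x) := by
  have hx : |x| ≤ exp x + exp (-x) := by
    cases abs_cases x <;> linarith [add_one_le_exp x, add_one_le_exp (-x), exp_pos x, exp_pos (-x)]
  calc |x| * exp y ≤ (exp x + exp (-x)) * exp y := by gcongr
    _ = exp (y + x) + exp (y - x) := by rw [exp_add, exp_sub, exp_neg]; field_simp

section norm2

variable {k : ℕ}

theorem norm2_eq_norm_toLp (x : Fin k → ℝ) : norm2 x = ‖WithLp.toLp 2 x‖ := by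
  simp [norm2, EuclideanSpace.norm_eq]

theorem norm2_nonneg (x : Fin k → ℝ) : 0 ≤ norm2 x := sqrt_nonneg _

theorem abs_apply_le_norm2 (x : Fin k → ℝ) (i : Fin k) : |x i| ≤ norm2 x := by
  simpa [norm2_eq_norm_toLp] using PiLp.norm_apply_le (WithLp.toLp 2 x) i

theorem norm2_smul (c : ℝ) (x : Fin k → ℝ) : norm2 (c • x) = |c| * norm2 x := by
  simp [norm2_eq_norm_toLp, norm_smul]

theorem abs_dotProduct_le_norm2_mul_norm2 (x y : Fin k → ℝ) : |x ⬝ᵥ y| ≤ norm2 x * norm2 y := by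
  simpa [norm2_eq_norm_toLp, EuclideanSpace.inner_eq_star_dotProduct, dotProduct_comm]
    using abs_real_inner_le_norm (WithLp.toLp 2 x) (WithLp.toLp 2 y)

theorem norm2_integral_le_integral_norm2 {Ω : Type*} [MeasurableSpace Ω] {μ : Measure Ω}
    {f : Ω → Fin k → ℝ} (hf : ∀ i, Integrable (fun ω => f ω i) μ) :
    norm2 (fun i => ∫ ω, f ω i ∂μ) ≤ ∫ ω, norm2 (f ω) ∂μ := by
  have hcoord : (fun i => ∫ ω, f ω i ∂μ) = WithLp.ofLp (∫ ω, WithLp.toLp 2 (f ω) ∂μ) := by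
    funext i
    exact (eval_integral_piLp (f := fun ω => WithLp.toLp 2 (f ω)) hf i).symm
  simpa only [hcoord, norm2_eq_norm_toLp, WithLp.toLp_ofLp]
    using norm_integral_le_integral_norm _

end norm2

theorem norm2_exp_dotProduct_sub_mul_sub_le {k : ℕ} (θ x y : Fin k → ℝ) {K : ℝ}
    (h : norm2 (x - y) ≤ K) :
    norm2 (fun i => (exp (θ ⬝ᵥ x) - exp (θ ⬝ᵥ y)) * (x i - y i))
      ≤ norm2 θ * K ^ 2 * ((exp (θ ⬝ᵥ x) + exp (θ ⬝ᵥ y)) / 2) := by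
  have hθ := norm2_nonneg θ
  have hD := norm2_nonneg (x - y)
  have hdot : |θ ⬝ᵥ x - θ ⬝ᵥ y| ≤ norm2 θ * norm2 (x - y) := by
    rw [← dotProduct_sub]
    exact abs_dotProduct_le_norm2_mul_norm2 θ (x - y)
  calc norm2 (fun i => (exp (θ ⬝ᵥ x) - exp (θ ⬝ᵥ y)) * (x i - y i))
      = |exp (θ ⬝ᵥ x) - exp (θ ⬝ᵥ y)| * norm2 (x - y) := norm2_smul _ (x - y)
    _ ≤ norm2 θ * norm2 (x - y) * (exp (θ ⬝ᵥ x) + exp (θ ⬝ᵥ y)) / 2 * norm2 (x - y) := by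
      gcongr
      exact (abs_exp_sub_exp_le _ _).trans (by gcongr)
    _ = norm2 θ * norm2 (x - y) ^ 2 * ((exp (θ ⬝ᵥ x) + exp (θ ⬝ᵥ y)) / 2) := by ring
    _ ≤ norm2 θ * K ^ 2 * ((exp (θ ⬝ᵥ x) + exp (θ ⬝ᵥ y)) / 2) := by gcongr

section smallestSingularValue

variable {k : ℕ} (Λ : Matrix (Fin k) (Fin k) ℝ)

theorem smallestSingularValue_nonneg : 0 ≤ smallestSingularValue Λ :=
  Real.sInf_nonneg fun _ ⟨_, _, hr⟩ => hr ▸ norm2_nonneg _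

theorem smallestSingularValue_mul_norm2_le (u : Fin k → ℝ) :
    smallestSingularValue Λ * norm2 u ≤ norm2 (Λ *ᵥ u) := by
  rcases (norm2_nonneg u).eq_or_lt with hu | hu
  · rw [← hu, mul_zero]
    exact norm2_nonneg _
  have hunit : norm2 ((norm2 u)⁻¹ • u) = 1 := by
    rw [norm2_smul, abs_of_pos (inv_pos.2 hu), inv_mul_cancel₀ hu.ne']
  have hle : smallestSingularValue Λ ≤ (norm2 u)⁻¹ * norm2 (Λ *ᵥ u) := by
    rw [← abs_of_pos (inv_pos.2 hu), ← norm2_smul, ← mulVec_smul]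
    exact csInf_le ⟨0, fun _ ⟨_, _, hr⟩ => hr ▸ norm2_nonneg _⟩ ⟨_, hunit, rfl⟩
  rwa [← le_div_iff₀ hu, div_eq_inv_mul]

theorem smallestSingularValue_pos (hk : 0 < k) (hΛ : IsUnit Λ.det) :
    0 < smallestSingularValue Λ := by
  set C := ‖toEuclideanCLM (𝕜 := ℝ) Λ⁻¹‖
  have hC : ∀ x, norm2 x ≤ C * norm2 (Λ *ᵥ x) := fun x => by
    simpa [norm2_eq_norm_toLp, mulVec_mulVec, nonsing_inv_mul Λ hΛ]
      using (toEuclideanCLM (𝕜 := ℝ) Λ⁻¹).le_opNorm (WithLp.toLp 2 (Λ *ᵥ x))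
  set e : Fin k → ℝ := Pi.single ⟨0, hk⟩ 1
  have he : norm2 e = 1 := by simp [norm2_eq_norm_toLp, e]
  have hCpos : 0 < C := by
    have := he ▸ hC e
    exact pos_of_mul_pos_left (one_pos.trans_le this) (norm2_nonneg _)
  refine (inv_pos.2 hCpos).trans_le (le_csInf ⟨_, e, he, rfl⟩ ?_)
  rintro r ⟨x, hx, rfl⟩
  rw [inv_le_iff_one_le_mul₀' hCpos]
  exact hx ▸ hC x

theorem norm2_le_norm2_mulVec_div_smallestSingularValue (hΛ : IsUnit Λ.det) (u : Fin k → ℝ) :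
    norm2 u ≤ norm2 (Λ *ᵥ u) / smallestSingularValue Λ := by
  rcases Nat.eq_zero_or_pos k with rfl | hk
  · simp [norm2]
  rw [le_div_iff₀' (smallestSingularValue_pos Λ hk hΛ)]
  exact smallestSingularValue_mul_norm2_le Λ u

end smallestSingularValue

theorem integral_mul_eq_integral_mul_of_condExp_ae_eq {Ω : Type*} {m m₀ : MeasurableSpace Ω}
    {μ : Measure[m₀] Ω} [IsFiniteMeasure μ] (hm : m ≤ m₀) {g Y Z : Ω → ℝ}
    (hg : StronglyMeasurable[m] g) (hgY : Integrable (g * Y) μ) (hY : Integrable Y μ)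
    (hYZ : μ[Y | m] =ᵐ[μ] Z) :
    ∫ ω, g ω * Y ω ∂μ = ∫ ω, g ω * Z ω ∂μ :=
  calc ∫ ω, g ω * Y ω ∂μ = ∫ ω, μ[g * Y | m] ω ∂μ := (integral_condExp hm).symm
    _ = ∫ ω, g ω * Z ω ∂μ := integral_congr_ae <|
      (condExp_mul_of_stronglyMeasurable_left hg hgY hY).trans (hYZ.mono fun ω h => by simp [h])

section ExchangeablePair

variable {Ω : Type*} [MeasurableSpace Ω] {μ : Measure Ω} {k : ℕ} {W W' : Ω → Fin k → ℝ}

theorem integrable_coord_mul_exp_dotProduct (hW : Measurable W)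
    (hmgf : ∀ θ : Fin k → ℝ, Integrable (fun ω => exp (θ ⬝ᵥ W ω)) μ) (θ : Fin k → ℝ)
    (i : Fin k) : Integrable (fun ω => W ω i * exp (θ ⬝ᵥ W ω)) μ := by
  refine ((hmgf (θ + Pi.single i 1)).add (hmgf (θ - Pi.single i 1))).mono' (by fun_prop)
    (ae_of_all _ fun ω => ?_)
  simpa [add_dotProduct, sub_dotProduct, abs_mul] using abs_mul_exp_le (W ω i) (θ ⬝ᵥ W ω)

theorem integrable_mul_coord_sub (hW : Measurable W) (hW' : Measurable W') {K : ℝ}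
    (hK : ∀ᵐ ω ∂μ, norm2 (W ω - W' ω) ≤ K) {g : Ω → ℝ} (hg : Integrable g μ) (i : Fin k) :
    Integrable (fun ω => g ω * (W ω i - W' ω i)) μ :=
  hg.mul_bdd (by fun_prop) (hK.mono fun ω h => (abs_apply_le_norm2 (W ω - W' ω) i).trans h)

theorem integral_mul_coord_sub_eq_half_integral
    (hexch : IdentDistrib (fun ω => (W ω, W' ω)) (fun ω => (W' ω, W ω)) μ μ)
    {φ : (Fin k → ℝ) → ℝ} (hφ : Measurable φ) {i : Fin k}
    (h : Integrable (fun ω => φ (W ω) * (W ω i - W' ω i)) μ) :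
    ∫ ω, φ (W ω) * (W ω i - W' ω i) ∂μ
      = 1 / 2 * ∫ ω, (φ (W ω) - φ (W' ω)) * (W ω i - W' ω i) ∂μ := by
  have hswap : IdentDistrib (fun ω => φ (W ω) * (W ω i - W' ω i))
      (fun ω => φ (W' ω) * (W' ω i - W ω i)) μ μ :=
    hexch.comp (u := fun p : (Fin k → ℝ) × (Fin k → ℝ) => φ p.1 * (p.1 i - p.2 i)) (by fun_prop)
  have h' : Integrable (fun ω => φ (W' ω) * (W' ω i - W ω i)) μ := hswap.integrable_iff.1 h
  have hsum : ∫ ω, (φ (W ω) - φ (W' ω)) * (W ω i - W' ω i) ∂μ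
      = ∫ ω, φ (W ω) * (W ω i - W' ω i) ∂μ + ∫ ω, φ (W' ω) * (W' ω i - W ω i) ∂μ := by
    rw [← integral_add h h']
    congr 1 with ω
    ring
  rw [hsum, ← hswap.integral_eq]
  ring

theorem integral_mul_coord_sub_eq_mulVec [IsFiniteMeasure μ] (hW : Measurable W)
    {Λ : Matrix (Fin k) (Fin k) ℝ}
    (hcond : ∀ i, μ[fun ω => W' ω i | MeasurableSpace.comap W inferInstance]
      =ᵐ[μ] fun ω => ∑ j, (1 - Λ) i j * W ω j)
    {φ : (Fin k → ℝ) → ℝ} (hφ : Measurable φ) (hWφ : ∀ j, Integrable (fun ω => W ω j * φ (W ω)) μ)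
    {i : Fin k} (hW'φ : Integrable (fun ω => φ (W ω) * W' ω i) μ)
    (hW' : Integrable (fun ω => W' ω i) μ) :
    ∫ ω, φ (W ω) * (W ω i - W' ω i) ∂μ = (Λ *ᵥ fun j => ∫ ω, W ω j * φ (W ω) ∂μ) i := by
  set G := fun j => ∫ ω, W ω j * φ (W ω) ∂μ
  have hφW : StronglyMeasurable[MeasurableSpace.comap W inferInstance] (fun ω => φ (W ω)) :=
    (hφ.comp (comap_measurable W)).stronglyMeasurable
  have hW'G : ∫ ω, φ (W ω) * W' ω i ∂μ = ((1 - Λ) *ᵥ G) i := by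
    rw [integral_mul_eq_integral_mul_of_condExp_ae_eq hW.comap_le hφW hW'φ hW' (hcond i)]
    calc ∫ ω, φ (W ω) * ∑ j, (1 - Λ) i j * W ω j ∂μ
        = ∫ ω, ∑ j, (1 - Λ) i j * (W ω j * φ (W ω)) ∂μ := by
          congr 1 with ω
          rw [Finset.mul_sum]
          exact Finset.sum_congr rfl fun j _ => by ring
      _ = ((1 - Λ) *ᵥ G) i := by
          rw [integral_finsetSum _ fun j _ => (hWφ j).const_mul _]
          simp only [integral_const_mul]
          rfl
  have hsplit : ∫ ω, φ (W ω) * (W ω i - W' ω i) ∂μ = G i - ∫ ω, φ (W ω) * W' ω i ∂μ := by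
    simp only [G, mul_comm (W _ i)]
    rw [← integral_sub ((hWφ i).congr (ae_of_all _ fun ω => mul_comm _ _)) hW'φ]
    congr 1 with ω
    ring
  rw [hsplit, hW'G, sub_mulVec, one_mulVec, Pi.sub_apply, sub_sub_cancel]

theorem mulVec_integral_coord_mul_exp_eq [IsFiniteMeasure μ] (hW : Measurable W)
    (hW' : Measurable W')
    (hexch : IdentDistrib (fun ω => (W ω, W' ω)) (fun ω => (W' ω, W ω)) μ μ)
    {Λ : Matrix (Fin k) (Fin k) ℝ}
    (hcond : ∀ i, μ[fun ω => W' ω i | MeasurableSpace.comap W inferInstance]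
      =ᵐ[μ] fun ω => ∑ j, (1 - Λ) i j * W ω j)
    {K : ℝ} (hK : ∀ᵐ ω ∂μ, norm2 (W ω - W' ω) ≤ K)
    (hmgf : ∀ θ : Fin k → ℝ, Integrable (fun ω => exp (θ ⬝ᵥ W ω)) μ) (θ : Fin k → ℝ) :
    Λ *ᵥ (fun i => ∫ ω, W ω i * exp (θ ⬝ᵥ W ω) ∂μ)
      = (1 / 2 : ℝ) • fun i => ∫ ω, (exp (θ ⬝ᵥ W ω) - exp (θ ⬝ᵥ W' ω)) * (W ω i - W' ω i) ∂μ := by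
  funext i
  have hWf := integrable_coord_mul_exp_dotProduct hW hmgf θ
  have hfD := integrable_mul_coord_sub hW hW' hK (hmgf θ) i
  have hW'f : Integrable (fun ω => exp (θ ⬝ᵥ W ω) * W' ω i) μ :=
    ((hWf i).sub hfD).congr (ae_of_all _ fun ω => by simp only [Pi.sub_apply]; ring)
  have hWW' : IdentDistrib (fun ω => W ω i) (fun ω => W' ω i) μ μ :=
    hexch.comp (u := fun p : (Fin k → ℝ) × (Fin k → ℝ) => p.1 i) (by fun_prop)
  have hW'i : Integrable (fun ω => W' ω i) μ :=
    hWW'.integrable_iff.1 (by simpa using integrable_coord_mul_exp_dotProduct hW hmgf 0 i)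
  calc (Λ *ᵥ fun i => ∫ ω, W ω i * exp (θ ⬝ᵥ W ω) ∂μ) i
      = ∫ ω, exp (θ ⬝ᵥ W ω) * (W ω i - W' ω i) ∂μ :=
        (integral_mul_coord_sub_eq_mulVec hW hcond (φ := fun x => exp (θ ⬝ᵥ x)) (by fun_prop)
          hWf hW'f hW'i).symm
    _ = _ := integral_mul_coord_sub_eq_half_integral hexch (φ := fun x => exp (θ ⬝ᵥ x))
          (by fun_prop) hfD

theorem norm2_integral_exp_sub_mul_sub_le [IsFiniteMeasure μ] (hW : Measurable W)
    (hW' : Measurable W')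
    (hexch : IdentDistrib (fun ω => (W ω, W' ω)) (fun ω => (W' ω, W ω)) μ μ)
    {K : ℝ} (hK : ∀ᵐ ω ∂μ, norm2 (W ω - W' ω) ≤ K) {θ : Fin k → ℝ}
    (hmgf : Integrable (fun ω => exp (θ ⬝ᵥ W ω)) μ) :
    norm2 (fun i => ∫ ω, (exp (θ ⬝ᵥ W ω) - exp (θ ⬝ᵥ W' ω)) * (W ω i - W' ω i) ∂μ)
      ≤ norm2 θ * K ^ 2 * ∫ ω, exp (θ ⬝ᵥ W ω) ∂μ := by
  have hexp : IdentDistrib (fun ω => exp (θ ⬝ᵥ W' ω)) (fun ω => exp (θ ⬝ᵥ W ω)) μ μ :=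
    hexch.comp (u := fun p : (Fin k → ℝ) × (Fin k → ℝ) => exp (θ ⬝ᵥ p.2)) (by fun_prop)
  have hmgf' := hexp.integrable_iff.2 hmgf
  calc _ ≤ ∫ ω, norm2 (fun i => (exp (θ ⬝ᵥ W ω) - exp (θ ⬝ᵥ W' ω)) * (W ω i - W' ω i)) ∂μ :=
        norm2_integral_le_integral_norm2 (integrable_mul_coord_sub hW hW' hK (hmgf.sub hmgf'))
    _ ≤ ∫ ω, norm2 θ * K ^ 2 * ((exp (θ ⬝ᵥ W ω) + exp (θ ⬝ᵥ W' ω)) / 2) ∂μ :=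
        integral_mono_of_nonneg (ae_of_all _ fun _ => norm2_nonneg _)
          (((hmgf.add hmgf').div_const 2).const_mul _)
          (hK.mono fun ω h => norm2_exp_dotProduct_sub_mul_sub_le θ _ _ h)
    _ = norm2 θ * K ^ 2 * ∫ ω, exp (θ ⬝ᵥ W ω) ∂μ := by
        rw [integral_const_mul, integral_div, integral_add hmgf hmgf', hexp.integral_eq]
        ring

end ExchangeablePair

/-- For an exchangeable pair `(W, W')` satisfying `E(W'|W) = (I - Λ)W` with `Λ` invertible,
`‖W - W'‖₂ ≤ K` a.s. and finite mgf, the gradient `∇m(θ) = E(W e^{θᵗW})` of the mgf satisfies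
`‖∇m(θ)‖₂ ≤ (K² ‖θ‖₂ ν₁ / 2) m(θ)` where `ν₁ = 1/σ₁(Λ)`. -/
theorem grad_mgf_bound
    {Ω : Type*} [MeasurableSpace Ω] (μ : Measure Ω) [IsProbabilityMeasure μ]
    {k : ℕ} (W W' : Ω → Fin k → ℝ)
    (hWmeas : Measurable W) (hW'meas : Measurable W')
    (hexch : IdentDistrib (fun ω => (W ω, W' ω)) (fun ω => (W' ω, W ω)) μ μ)
    (Λ : Matrix (Fin k) (Fin k) ℝ) (hΛ : IsUnit Λ.det)
    (hcond : ∀ i, μ[fun ω => W' ω i | MeasurableSpace.comap W inferInstance]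
      =ᵐ[μ] fun ω => ∑ j, (1 - Λ) i j * W ω j)
    (K : ℝ) (hK : ∀ᵐ ω ∂μ, norm2 (fun i => W ω i - W' ω i) ≤ K)
    (hmgf : ∀ θ : Fin k → ℝ, Integrable (fun ω => Real.exp (θ ⬝ᵥ W ω)) μ)
    (θ : Fin k → ℝ) :
    norm2 (fun i => ∫ ω, W ω i * Real.exp (θ ⬝ᵥ W ω) ∂μ)
      ≤ (K ^ 2 * norm2 θ * (1 / smallestSingularValue Λ) / 2) *
          ∫ ω, Real.exp (θ ⬝ᵥ W ω) ∂μ := by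
  have hstein := mulVec_integral_coord_mul_exp_eq hWmeas hW'meas hexch hcond hK hmgf θ
  have hbound := norm2_integral_exp_sub_mul_sub_le hWmeas hW'meas hexch hK (hmgf θ)
  have hσ := smallestSingularValue_nonneg Λ
  calc norm2 (fun i => ∫ ω, W ω i * exp (θ ⬝ᵥ W ω) ∂μ)
      ≤ norm2 (Λ *ᵥ fun i => ∫ ω, W ω i * exp (θ ⬝ᵥ W ω) ∂μ) / smallestSingularValue Λ :=
        norm2_le_norm2_mulVec_div_smallestSingularValue Λ hΛ _
    _ ≤ 1 / 2 * (norm2 θ * K ^ 2 * ∫ ω, exp (θ ⬝ᵥ W ω) ∂μ) / smallestSingularValue Λ := by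
        rw [hstein, norm2_smul, abs_of_pos one_half_pos]
        gcongr
    _ = (K ^ 2 * norm2 θ * (1 / smallestSingularValue Λ) / 2) *
          ∫ ω, exp (θ ⬝ᵥ W ω) ∂μ := by ring
end

section
/- Let Λ be the d×d lower bidiagonal matrix with Λ_{ii} = i/n, Λ_{i,i−1} = −i/n for i ≥ 2, and zeros elsewhere. Then the smallest singular value satisfies σ₁(Λ)² ≥ κ_d n^{−2}, where κ_d = (d!)² 3^{d−1} / (d(d+1)(2d+1))^{d−1}. -/
/-!
Up to the factor `1 / n`, `Λ` is the lower bidiagonal matrix `L` with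
`(L x)ₖ = (k + 1) (xₖ - xₖ₋₁)` (indices from `0`, `x₋₁ = 0`). Telescoping gives
`xₖ = ∑_{j ≤ k} (L x)ⱼ / (j + 1)`, so Cauchy–Schwarz yields `‖x‖² ≤ T_d ‖L x‖²` with
`T_d = ∑_{k < d} ∑_{j ≤ k} (j + 1)⁻² ≤ 2 d`; this bounds `L⁻¹` directly instead of going through
`det / trace ^ (d - 1)`. Finally `κ_d T_d ≤ 1` follows from `d! ≤ d ^ (d - 1)` and
`2 d ≤ (2 d / 3) ^ (d - 1)` for `d ≥ 4`, and is checked numerically for `d ≤ 3`.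
-/

open Matrix

open Finset
open scoped Nat

lemma Nat.factorial_le_pow_pred (d : ℕ) : d ! ≤ d ^ (d - 1) := by
  have h := factorial_mul_descFactorial (sub_le d 1)
  rw [factorial_eq_one.mpr (by omega), one_mul] at h
  exact h ▸ descFactorial_le_pow d (d - 1)

lemma sum_range_inv_sq_le_two (m : ℕ) : ∑ j ∈ range m, (((j : ℝ) + 1) ^ 2)⁻¹ ≤ 2 := by
  have h := sum_Ioo_inv_sq_le (α := ℝ) 0 (m + 1)
  rw [← Ico_add_one_left_eq_Ioo, ← sum_Ico_add', ← range_eq_Ico] at h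
  simpa using h

lemma sq_le_sum_inv_sq_mul_sum_sq (Z a : ℕ → ℝ) (hZ : Z 0 = 0) (ha : ∀ j, a j ≠ 0) (m : ℕ) :
    Z m ^ 2 ≤ (∑ j ∈ range m, (a j ^ 2)⁻¹) * ∑ j ∈ range m, (a j * (Z (j + 1) - Z j)) ^ 2 := by
  have hZm : Z m = ∑ j ∈ range m, (a j)⁻¹ * (a j * (Z (j + 1) - Z j)) := by
    simp only [inv_mul_cancel_left₀ (ha _)]
    rw [sum_range_sub, hZ, sub_zero]
  rw [hZm]
  simpa [inv_pow] using sum_mul_sq_le_sq_mul_sq (range m) (fun j => (a j)⁻¹) _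

lemma le_smallestSingularValue_sq {k : ℕ} (hk : 0 < k) (A : Matrix (Fin k) (Fin k) ℝ) (c : ℝ)
    (h : ∀ x, c * ∑ i, x i ^ 2 ≤ ∑ i, (A *ᵥ x) i ^ 2) : c ≤ smallestSingularValue A ^ 2 := by
  have hne : {r | ∃ x : Fin k → ℝ, norm2 x = 1 ∧ r = norm2 (A *ᵥ x)}.Nonempty :=
    ⟨_, Pi.single ⟨0, hk⟩ 1, by simp [norm2, Pi.single_apply], rfl⟩
  have hsqrt : √c ≤ smallestSingularValue A := by
    refine le_csInf hne ?_
    rintro r ⟨x, hx, rfl⟩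
    rw [norm2, Real.sqrt_eq_one] at hx
    exact Real.sqrt_le_sqrt (by simpa [hx] using h x)
  calc c ≤ √c ^ 2 := Real.sq_sqrt' ▸ le_max_left c 0
    _ ≤ smallestSingularValue A ^ 2 := by gcongr

section LowerBidiagonal

variable {d : ℕ}

def lowerBidiagonal (d : ℕ) (a : ℕ → ℝ) : Matrix (Fin d) (Fin d) ℝ :=
  of fun i j => if i = j then a i else if (j : ℕ) + 1 = i then -a i else 0

def prependZero (x : Fin d → ℝ) : ℕ → ℝ
  | 0 => 0
  | k + 1 => if h : k < d then x ⟨k, h⟩ else 0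

lemma lowerBidiagonal_mulVec_apply (a : ℕ → ℝ) (x : Fin d → ℝ) (i : Fin d) :
    (lowerBidiagonal d a *ᵥ x) i = a i * (prependZero x (i + 1) - prependZero x i) := by
  rcases i with ⟨_ | m, hm⟩
  · simp [lowerBidiagonal, mulVec, dotProduct, prependZero, hm]
  · simp only [lowerBidiagonal, mulVec, dotProduct, of_apply, Nat.add_right_cancel_iff, ite_mul,
      neg_mul, zero_mul, prependZero, dif_pos hm, dif_pos (show m < d by omega)]
    rw [Fintype.sum_eq_add ⟨m + 1, hm⟩ ⟨m, by omega⟩ (by simp [Fin.ext_iff])]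
    · simp only [if_pos, Fin.mk.injEq, Nat.add_eq_left, one_ne_zero, if_false]
      ring
    · intro j hj
      simp_all [Fin.ext_iff, eq_comm]

lemma sum_sq_le_mul_sum_sq_lowerBidiagonal_mulVec (a : ℕ → ℝ) (ha : ∀ j, a j ≠ 0)
    (x : Fin d → ℝ) :
    ∑ i, x i ^ 2 ≤ (∑ k ∈ range d, ∑ j ∈ range (k + 1), (a j ^ 2)⁻¹) *
      ∑ i, (lowerBidiagonal d a *ᵥ x) i ^ 2 := by
  set Z := prependZero x
  have hx : ∑ i, x i ^ 2 = ∑ k ∈ range d, Z (k + 1) ^ 2 := by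
    rw [← Fin.sum_univ_eq_sum_range (fun k => Z (k + 1) ^ 2)]
    simp [Z, prependZero]
  have hLx : ∑ i, (lowerBidiagonal d a *ᵥ x) i ^ 2 =
      ∑ j ∈ range d, (a j * (Z (j + 1) - Z j)) ^ 2 := by
    rw [← Fin.sum_univ_eq_sum_range (fun j => (a j * (Z (j + 1) - Z j)) ^ 2)]
    simp only [lowerBidiagonal_mulVec_apply, Z]
  rw [hx, hLx, sum_mul]
  gcongr with k hk
  refine (sq_le_sum_inv_sq_mul_sum_sq Z a rfl ha (k + 1)).trans ?_
  gcongr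
  exact mem_range.mp hk

end LowerBidiagonal

lemma two_mul_mul_three_mul_sq_pow_le {d : ℕ} (hd : 4 ≤ d) :
    2 * (d : ℝ) * (3 * d ^ 2) ^ (d - 1) ≤ ((d : ℝ) * (d + 1) * (2 * d + 1)) ^ (d - 1) := by
  have hd' : (4 : ℝ) ≤ d := by exact_mod_cast hd
  have h2d : 2 * (d : ℝ) ≤ (2 * d / 3) ^ (d - 1) :=
    calc 2 * (d : ℝ) ≤ (2 * d / 3) ^ 3 := by
          nlinarith [mul_le_mul hd' hd' (by norm_num) (by linarith)]
      _ ≤ (2 * d / 3) ^ (d - 1) := pow_le_pow_right₀ (by linarith) (by omega)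
  calc 2 * (d : ℝ) * (3 * d ^ 2) ^ (d - 1)
      ≤ (2 * d / 3) ^ (d - 1) * (3 * d ^ 2) ^ (d - 1) := by gcongr
    _ = (2 * (d : ℝ) ^ 3) ^ (d - 1) := by rw [← mul_pow]; ring_nf
    _ ≤ ((d : ℝ) * (d + 1) * (2 * d + 1)) ^ (d - 1) :=
      pow_le_pow_left₀ (by positivity) (by nlinarith) _

lemma factorial_sq_mul_three_pow_mul_sum_inv_sq_le {d : ℕ} (hd : 1 ≤ d) :
    (d ! : ℝ) ^ 2 * 3 ^ (d - 1) * ∑ k ∈ range d, ∑ j ∈ range (k + 1), (((j : ℝ) + 1) ^ 2)⁻¹ ≤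
      ((d : ℝ) * (d + 1) * (2 * d + 1)) ^ (d - 1) := by
  rcases le_or_gt d 3 with hd3 | hd3
  · interval_cases d <;> norm_num [sum_range_succ, Nat.factorial]
  have hfact : (d ! : ℝ) ≤ d ^ (d - 1) := by exact_mod_cast Nat.factorial_le_pow_pred d
  have hsum : ∑ k ∈ range d, ∑ j ∈ range (k + 1), (((j : ℝ) + 1) ^ 2)⁻¹ ≤ 2 * (d : ℝ) := by
    simpa [mul_comm] using sum_le_sum fun k (_ : k ∈ range d) => sum_range_inv_sq_le_two (k + 1)
  have hsum_nonneg : 0 ≤ ∑ k ∈ range d, ∑ j ∈ range (k + 1), (((j : ℝ) + 1) ^ 2)⁻¹ :=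
    sum_nonneg fun k _ => sum_nonneg fun j _ => by positivity
  calc _ ≤ ((d : ℝ) ^ (d - 1)) ^ 2 * 3 ^ (d - 1) * (2 * d) :=
        mul_le_mul (by gcongr) hsum hsum_nonneg (by positivity)
    _ = 2 * d * (3 * d ^ 2) ^ (d - 1) := by ring
    _ ≤ _ := two_mul_mul_three_mul_sq_pow_le hd3

lemma mul_sum_sq_le_sum_sq_lowerBidiagonal_mulVec {d : ℕ} (hd : 1 ≤ d) (x : Fin d → ℝ) :
    (d ! : ℝ) ^ 2 * 3 ^ (d - 1) / ((d : ℝ) * (d + 1) * (2 * d + 1)) ^ (d - 1) * ∑ i, x i ^ 2 ≤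
      ∑ i, (lowerBidiagonal d (fun j => j + 1) *ᵥ x) i ^ 2 := by
  have hx := sum_sq_le_mul_sum_sq_lowerBidiagonal_mulVec (fun j => (j : ℝ) + 1)
    (fun j => by positivity) x
  have hT := factorial_sq_mul_three_pow_mul_sum_inv_sq_le hd
  have hD : (0 : ℝ) < ((d : ℝ) * (d + 1) * (2 * d + 1)) ^ (d - 1) := pow_pos (by positivity) _
  have hF : (0 : ℝ) ≤ d ! ^ 2 * 3 ^ (d - 1) := by positivity
  set F : ℝ := d ! ^ 2 * 3 ^ (d - 1)
  set D : ℝ := ((d : ℝ) * (d + 1) * (2 * d + 1)) ^ (d - 1)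
  set T := ∑ k ∈ range d, ∑ j ∈ range (k + 1), (((j : ℝ) + 1) ^ 2)⁻¹
  set Q := ∑ i, (lowerBidiagonal d (fun j => j + 1) *ᵥ x) i ^ 2
  rw [div_mul_eq_mul_div, div_le_iff₀ hD]
  calc F * ∑ i, x i ^ 2 ≤ F * (T * Q) := mul_le_mul_of_nonneg_left hx hF
    _ = F * T * Q := (mul_assoc ..).symm
    _ ≤ D * Q := mul_le_mul_of_nonneg_right hT (sum_nonneg fun i _ => sq_nonneg _)
    _ = Q * D := mul_comm ..

theorem ustat_lambda_sigma1_bound_general (n d : ℕ) (hd : 1 ≤ d)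
    (Λ : Matrix (Fin d) (Fin d) ℝ)
    (hΛ : ∀ i j : Fin d, Λ i j =
      if i = j then (((i : ℕ) + 1 : ℝ)) / (n : ℝ)
      else if (j : ℕ) + 1 = (i : ℕ) then -((((i : ℕ) + 1 : ℝ)) / (n : ℝ)) else 0) :
    smallestSingularValue Λ ^ 2 ≥
      ((Nat.factorial d : ℝ) ^ 2 * 3 ^ (d - 1) /
          ((d : ℝ) * (d + 1) * (2 * d + 1)) ^ (d - 1)) / (n : ℝ) ^ 2 := by
  have hΛ_eq : Λ = (n : ℝ)⁻¹ • lowerBidiagonal d (fun j => j + 1) := by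
    ext i j
    rw [hΛ]
    simp only [lowerBidiagonal, Matrix.smul_apply, of_apply, smul_eq_mul]
    split_ifs <;> ring
  refine le_smallestSingularValue_sq hd _ _ fun x => ?_
  have h := mul_le_mul_of_nonneg_left (mul_sum_sq_le_sum_sq_lowerBidiagonal_mulVec hd x)
    (sq_nonneg (n : ℝ)⁻¹)
  rw [hΛ_eq, smul_mulVec]
  simp only [Pi.smul_apply, smul_eq_mul, mul_pow _ _ 2, ← mul_sum]
  linear_combination h

/-- For the lower bidiagonal matrix `Λ` with `Λ_{ii} = i/n` and `Λ_{i,i-1} = -i/n`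
(written with 0-based `Fin d` indexing), the smallest singular value satisfies
`σ₁(Λ)² ≥ κ_d n⁻²` where `κ_d = (d!)² 3^{d-1} / (d(d+1)(2d+1))^{d-1}`. -/
theorem ustat_lambda_sigma1_bound (n d : ℕ) (hn : 0 < n) (hd : 1 ≤ d)
    (Λ : Matrix (Fin d) (Fin d) ℝ)
    (hΛ : ∀ i j : Fin d, Λ i j =
      if i = j then (((i : ℕ) + 1 : ℝ)) / (n : ℝ)
      else if (j : ℕ) + 1 = (i : ℕ) then -((((i : ℕ) + 1 : ℝ)) / (n : ℝ)) else 0) :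
    smallestSingularValue Λ ^ 2 ≥
      ((Nat.factorial d : ℝ) ^ 2 * 3 ^ (d - 1) /
          ((d : ℝ) * (d + 1) * (2 * d + 1)) ^ (d - 1)) / (n : ℝ) ^ 2 :=
  ustat_lambda_sigma1_bound_general n d hd Λ hΛ
end

section
/- Let X₁,…,Xₙ be i.i.d. random variables and ψ: ℝ^d → ℝ a symmetric measurable function with ‖ψ‖_∞ ≤ b, Eψ(X₁,…,X_d) = 0, and P(E(ψ(X₁,…,X_d)|X₁) = 0) < 1. Let W_d = n^{1/2} (n choose d)^{-1} Σ_{j₁<⋯<j_d} ψ(X_{j₁},…,X_{j_d}). Then for all t > 0, P(W_d ≥ t) ≤ exp(−t² κ_d^{1/2} / (8b²γ_d²)) and P(W_d ≤ −t) ≤ exp(−t² κ_d^{1/2} / (8b²γ_d²)), where γ_d = (d(d+1)(2d+1)/6)^{1/2} and κ_d = (d!)² 3^{d−1} / (d(d+1)(2d+1))^{d−1}. -/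
/-!
Hoeffding's representation. With `m = ⌊n / d⌋`, split the first `m d` positions of a permutation
`σ` of the sample into `m` disjoint blocks of size `d`; the block sum
`V_σ = ∑ₖ ψ(X_{σ(kd+1)}, …, X_{σ(kd+d)})` is a sum of `m` independent, centred terms bounded by
`b`, so by Hoeffding's lemma it is sub-Gaussian with variance proxy `m b²`. Averaging over all
permutations recovers the U-statistic, `W_d = √n / m · (1/n!) ∑_σ V_σ`, and by convexity of `exp`
an average of sub-Gaussian variables is sub-Gaussian with the same proxy. Hence `W_d` has proxy
`n b² / m ≤ 2 d b²`, and the Chernoff bound `exp(-t² m / (2 n b²))` beats the stated one since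
`√κ_d ≤ 2 γ_d² / d`.
-/

open MeasureTheory ProbabilityTheory Real Finset
open scoped NNReal

namespace ProbabilityTheory

variable {Ω : Type*} [MeasurableSpace Ω] {μ : Measure Ω}

lemma iIndepFun.curry {ι κ 𝓧 : Type*} [MeasurableSpace 𝓧] {Y : ι × κ → Ω → 𝓧}
    (hY : ∀ p, Measurable (Y p)) (h : iIndepFun Y μ) :
    iIndepFun (fun i ω j => Y (i, j) ω) μ := by
  have := h.isProbabilityMeasure
  have (i : ι) (j : κ) : IsProbabilityMeasure (μ.map (Y (i, j))) :=
    Measure.isProbabilityMeasure_map (hY _).aemeasurable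
  have hrow (i : ι) :
      μ.map (fun ω j => Y (i, j) ω) = Measure.infinitePi fun j => μ.map (Y (i, j)) :=
    (h.precomp (Prod.mk_right_injective i)).map_fun_eq_infinitePi_map fun j => hY _
  rw [iIndepFun_iff_map_fun_eq_infinitePi_map fun i => measurable_pi_lambda _ fun j => hY _]
  simp_rw [hrow]
  rw [← Measure.infinitePi_map_curry (fun i j => μ.map (Y (i, j))),
    ← h.map_fun_eq_infinitePi_map hY, Measure.map_map (by fun_prop) (measurable_pi_lambda _ hY)]
  rfl

lemma iIndepFun.map_comp_eq_map_comp {ι κ 𝓧 : Type*} [Fintype κ] [MeasurableSpace 𝓧]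
    {X : ι → Ω → 𝓧} (hX : ∀ i, Measurable (X i)) (h : iIndepFun X μ) {e e' : κ → ι}
    (he : Function.Injective e) (he' : Function.Injective e')
    (hlaw : ∀ k, μ.map (X (e k)) = μ.map (X (e' k))) :
    μ.map (fun ω k => X (e k) ω) = μ.map (fun ω k => X (e' k) ω) := by
  rw [(h.precomp he).map_fun_eq_pi_map fun k => (hX _).aemeasurable,
    (h.precomp he').map_fun_eq_pi_map fun k => (hX _).aemeasurable]
  simp only [hlaw]

lemma HasSubgaussianMGF.sum_mul_of_sum_eq_one {ι : Type*} {s : Finset ι} {Y : ι → Ω → ℝ}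
    {c : ℝ≥0} {w : ι → ℝ} (hw₀ : ∀ i ∈ s, 0 ≤ w i) (hw₁ : ∑ i ∈ s, w i = 1)
    (hY : ∀ i ∈ s, HasSubgaussianMGF (Y i) c μ) :
    HasSubgaussianMGF (fun ω => ∑ i ∈ s, w i * Y i ω) c μ := by
  have jensen (t : ℝ) (ω : Ω) :
      exp (t * ∑ i ∈ s, w i * Y i ω) ≤ ∑ i ∈ s, w i * exp (t * Y i ω) := by
    have := convexOn_exp.map_sum_le hw₀ hw₁ fun i _ => Set.mem_univ (t * Y i ω)
    simpa [Finset.mul_sum, mul_left_comm t] using this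
  have hint (t : ℝ) : Integrable (fun ω => ∑ i ∈ s, w i * exp (t * Y i ω)) μ :=
    integrable_finsetSum _ fun i hi => ((hY i hi).integrable_exp_mul t).const_mul _
  have hmeas : AEStronglyMeasurable (fun ω => ∑ i ∈ s, w i * Y i ω) μ :=
    Finset.aestronglyMeasurable_fun_sum _ fun i hi => (hY i hi).aestronglyMeasurable.const_mul _
  have hint_exp (t : ℝ) : Integrable (fun ω => exp (t * ∑ i ∈ s, w i * Y i ω)) μ :=
    (hint t).mono' (continuous_exp.comp_aestronglyMeasurable (hmeas.const_mul t))
      (ae_of_all _ fun ω => by rw [norm_of_nonneg (exp_pos _).le]; exact jensen t ω)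
  refine ⟨hint_exp, fun t => ?_⟩
  calc mgf (fun ω => ∑ i ∈ s, w i * Y i ω) μ t
      ≤ ∫ ω, ∑ i ∈ s, w i * exp (t * Y i ω) ∂μ := integral_mono (hint_exp t) (hint t) (jensen t)
    _ = ∑ i ∈ s, w i * mgf (Y i) μ t := by
        rw [integral_finsetSum _ fun i hi => ((hY i hi).integrable_exp_mul t).const_mul _]
        exact sum_congr rfl fun i _ => integral_const_mul _ _
    _ ≤ ∑ i ∈ s, w i * exp (c * t ^ 2 / 2) :=
        sum_le_sum fun i hi => mul_le_mul_of_nonneg_left ((hY i hi).mgf_le t) (hw₀ i hi)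
    _ = exp (c * t ^ 2 / 2) := by rw [← sum_mul, hw₁, one_mul]

lemma hasSubgaussianMGF_of_abs_le [IsProbabilityMeasure μ] {Z : Ω → ℝ} (hZ : AEMeasurable Z μ)
    {b : ℝ} (hb : ∀ ω, |Z ω| ≤ b) (hmean : μ[Z] = 0) : HasSubgaussianMGF Z (‖b‖₊ ^ 2) μ := by
  have hoeffding := hasSubgaussianMGF_of_mem_Icc_of_integral_eq_zero hZ
    (ae_of_all _ fun ω => abs_le.1 (hb ω)) hmean
  rwa [sub_neg_eq_add, ← two_mul, nnnorm_mul, mul_div_right_comm, nnnorm_two,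
    div_self two_ne_zero, one_mul] at hoeffding

lemma HasSubgaussianMGF.measure_ge_le_ofReal_exp [IsFiniteMeasure μ] {Y : Ω → ℝ} {c : ℝ≥0}
    (h : HasSubgaussianMGF Y c μ) {ε r : ℝ} (hε : 0 ≤ ε) (hr : r ≤ ε ^ 2 / (2 * c)) :
    μ {ω | ε ≤ Y ω} ≤ ENNReal.ofReal (exp (-r)) := by
  rw [← ofReal_measureReal]
  refine ENNReal.ofReal_le_ofReal ((h.measure_ge_le hε).trans (exp_le_exp.2 ?_))
  rw [neg_div]
  exact neg_le_neg hr

end ProbabilityTheory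

section Combinatorics

variable {n d : ℕ}

lemma card_filter_injective_fin :
    #(univ.filter fun g : Fin d → Fin n => Function.Injective g) = n.descFactorial d := by
  classical
  rw [← Fintype.card_subtype, Fintype.card_congr (Equiv.subtypeInjectiveEquivEmbedding _ _),
    Fintype.card_embedding_eq, Fintype.card_fin, Fintype.card_fin]

lemma sum_perm_comp_eq_of_injective {M : Type*} [AddCommMonoid M] (F : (Fin d → Fin n) → M)
    {β β' : Fin d → Fin n} (hβ : Function.Injective β) (hβ' : Function.Injective β') :
    ∑ σ : Equiv.Perm (Fin n), F (σ ∘ β') = ∑ σ : Equiv.Perm (Fin n), F (σ ∘ β) := by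
  obtain ⟨τ, hτ⟩ := Equiv.Perm.exists_extending_pair β β' hβ hβ'
  refine Fintype.sum_equiv (Equiv.mulRight τ) _ _ fun σ => ?_
  congr 1
  funext i
  simp [hτ]

lemma sum_comp_perm_filter_injective {M : Type*} [AddCommMonoid M] (F : (Fin d → Fin n) → M)
    (σ : Equiv.Perm (Fin n)) :
    ∑ g ∈ univ.filter Function.Injective, F (σ ∘ g)
      = ∑ g ∈ univ.filter Function.Injective, F g :=
  sum_nbij' (σ ∘ ·) (σ.symm ∘ ·) (by simp [σ.injective.of_comp_iff])
    (by simp [σ.symm.injective.of_comp_iff]) (by simp [← Function.comp_assoc])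
    (by simp [← Function.comp_assoc]) (fun _ _ => rfl)

lemma descFactorial_smul_sum_perm_comp {M : Type*} [AddCommMonoid M] (F : (Fin d → Fin n) → M)
    {β : Fin d → Fin n} (hβ : Function.Injective β) :
    n.descFactorial d • ∑ σ : Equiv.Perm (Fin n), F (σ ∘ β)
      = n.factorial • ∑ g ∈ univ.filter Function.Injective, F g := by
  -- The left sum does not depend on the injection `β`, so average it over all of them.
  calc n.descFactorial d • ∑ σ : Equiv.Perm (Fin n), F (σ ∘ β)
      = ∑ g ∈ univ.filter Function.Injective, ∑ σ : Equiv.Perm (Fin n), F (σ ∘ g) := by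
        rw [← card_filter_injective_fin, ← sum_const]
        exact sum_congr rfl fun g hg =>
          (sum_perm_comp_eq_of_injective F hβ (mem_filter.1 hg).2).symm
    _ = ∑ σ : Equiv.Perm (Fin n), ∑ g ∈ univ.filter Function.Injective, F g := by
        rw [sum_comm]
        exact sum_congr rfl fun σ _ => sum_comp_perm_filter_injective F σ
    _ = n.factorial • ∑ g ∈ univ.filter Function.Injective, F g := by
        rw [sum_const, card_univ, Fintype.card_perm, Fintype.card_fin]

lemma sort_comp_perm_eq_inv {f : Fin d → Fin n} (hf : StrictMono f) (τ : Equiv.Perm (Fin d)) :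
    Tuple.sort (f ∘ τ) = τ⁻¹ := by
  refine (Tuple.eq_sort_iff.2 ⟨?_, fun i j hlt hij => ?_⟩).symm
  · simpa [Function.comp_def] using hf.monotone
  · exact absurd ((hf.injective.comp τ.injective).comp τ⁻¹.injective hij) hlt.ne

lemma sum_filter_injective_eq_factorial_smul {M : Type*} [AddCommMonoid M]
    (F : (Fin d → Fin n) → M) (hF : ∀ g (τ : Equiv.Perm (Fin d)), F (g ∘ τ) = F g) :
    ∑ g ∈ univ.filter Function.Injective, F g
      = d.factorial • ∑ f ∈ univ.filter (fun f : Fin d → Fin n => StrictMono f), F f := by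
  calc ∑ g ∈ univ.filter Function.Injective, F g
      = ∑ p ∈ (univ : Finset (Equiv.Perm (Fin d))) ×ˢ
          univ.filter (fun f : Fin d → Fin n => StrictMono f), F (p.2 ∘ p.1) := by
        refine (sum_nbij' (fun p : Equiv.Perm (Fin d) × (Fin d → Fin n) => p.2 ∘ p.1)
          (fun g => ((Tuple.sort g)⁻¹, g ∘ Tuple.sort g)) ?_ ?_ ?_ ?_ fun _ _ => rfl).symm
        · simp only [mem_product, mem_filter, mem_univ, true_and]
          exact fun p hp => hp.injective.comp p.1.injective
        · simp only [mem_product, mem_filter, mem_univ, true_and]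
          exact fun g hg => (Tuple.monotone_sort g).strictMono_of_injective
            (hg.comp (Tuple.sort g).injective)
        · simp only [mem_product, mem_filter, mem_univ, true_and]
          intro p hp
          rw [sort_comp_perm_eq_inv hp, inv_inv, Function.comp_assoc]
          simp
        · intro g _
          simp [Function.comp_assoc]
    _ = d.factorial • ∑ f ∈ univ.filter (fun f : Fin d → Fin n => StrictMono f), F f := by
        simp only [sum_product, hF, sum_const, card_univ, Fintype.card_perm, Fintype.card_fin]

lemma choose_mul_sum_perm_comp (F : (Fin d → Fin n) → ℝ)
    (hF : ∀ g (τ : Equiv.Perm (Fin d)), F (g ∘ τ) = F g) {β : Fin d → Fin n}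
    (hβ : Function.Injective β) :
    (n.choose d : ℝ) * ∑ σ : Equiv.Perm (Fin n), F (σ ∘ β)
      = n.factorial * ∑ f ∈ univ.filter (fun f : Fin d → Fin n => StrictMono f), F f := by
  have h := descFactorial_smul_sum_perm_comp F hβ
  rw [sum_filter_injective_eq_factorial_smul F hF, Nat.descFactorial_eq_factorial_mul_choose,
    smul_smul, nsmul_eq_mul, nsmul_eq_mul] at h
  push_cast at h
  have hfac : (d.factorial : ℝ) ≠ 0 := by positivity
  apply mul_left_cancel₀ hfac
  linear_combination h

lemma choose_mul_sum_perm_sum_comp {m : ℕ} (F : (Fin d → Fin n) → ℝ)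
    (hF : ∀ g (τ : Equiv.Perm (Fin d)), F (g ∘ τ) = F g) {β : Fin m → Fin d → Fin n}
    (hβ : ∀ k, Function.Injective (β k)) :
    (n.choose d : ℝ) * ∑ σ : Equiv.Perm (Fin n), ∑ k, F (σ ∘ β k)
      = m * n.factorial * ∑ f ∈ univ.filter (fun f : Fin d → Fin n => StrictMono f), F f := by
  rw [sum_comm, mul_sum, sum_congr rfl fun k _ => choose_mul_sum_perm_comp F hF (hβ k), sum_const,
    card_univ, Fintype.card_fin, nsmul_eq_mul, mul_assoc]

end Combinatorics

lemma sqrt_factorial_sq_mul_three_pow_div_le {d : ℕ} (hd : 0 < d) :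
    √((d.factorial : ℝ) ^ 2 * 3 ^ (d - 1) / ((d : ℝ) * (d + 1) * (2 * d + 1)) ^ (d - 1))
      ≤ (d : ℝ) * (d + 1) * (2 * d + 1) / (3 * d) := by
  set D : ℝ := (d : ℝ) * (d + 1) * (2 * d + 1)
  have hd1 : (1 : ℝ) ≤ d := by exact_mod_cast hd
  have hpow (y : ℝ) : y ^ (d + 1) = y ^ 2 * y ^ (d - 1) := by rw [← pow_add]; congr 1; omega
  have hsq : (d : ℝ) ^ 2 ≤ D / 3 := by
    simp only [D]
    nlinarith
  have hfac : (d.factorial : ℝ) ^ 2 ≤ (D / 3) ^ d :=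
    calc (d.factorial : ℝ) ^ 2 ≤ ((d : ℝ) ^ d) ^ 2 := by
          gcongr
          exact_mod_cast Nat.factorial_le_pow d
      _ = ((d : ℝ) ^ 2) ^ d := by ring
      _ ≤ (D / 3) ^ d := by gcongr
  rw [sqrt_le_left (by positivity), div_le_iff₀ (by positivity), div_pow, div_mul_eq_mul_div,
    le_div_iff₀ (by positivity)]
  calc (d.factorial : ℝ) ^ 2 * 3 ^ (d - 1) * (3 * d) ^ 2
      = 3 ^ (d + 1) * ((d.factorial : ℝ) ^ 2 * (d : ℝ) ^ 2) := by rw [hpow]; ring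
    _ ≤ 3 ^ (d + 1) * ((D / 3) ^ d * (D / 3)) := by gcongr
    _ = D ^ 2 * D ^ (d - 1) := by rw [← hpow, ← pow_succ, div_pow]; field_simp

lemma ustat_exponent_le {n d : ℕ} (hd : 0 < d) (hdn : d ≤ n) (b t : ℝ) :
    t ^ 2 * √((d.factorial : ℝ) ^ 2 * 3 ^ (d - 1) / ((d : ℝ) * (d + 1) * (2 * d + 1)) ^ (d - 1))
        / (8 * b ^ 2 * ((d : ℝ) * (d + 1) * (2 * d + 1) / 6))
      ≤ t ^ 2 / (2 * ((n : ℝ) / (n / d : ℕ) * b ^ 2)) := by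
  rcases eq_or_ne b 0 with rfl | hb
  · simp
  have hm : 0 < n / d := Nat.div_pos hdn hd
  have hnm : n ≤ 2 * d * (n / d) := by
    have := Nat.div_add_mod n d
    have := Nat.mod_lt n hd
    have := Nat.le_mul_of_pos_right d hm
    linarith
  have hdR : (0 : ℝ) < d := by exact_mod_cast hd
  have hnR : (0 : ℝ) < n := by exact_mod_cast hd.trans_le hdn
  calc t ^ 2 * √((d.factorial : ℝ) ^ 2 * 3 ^ (d - 1) / ((d : ℝ) * (d + 1) * (2 * d + 1)) ^ (d - 1))
        / (8 * b ^ 2 * ((d : ℝ) * (d + 1) * (2 * d + 1) / 6))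
      ≤ t ^ 2 * ((d : ℝ) * (d + 1) * (2 * d + 1) / (3 * d))
        / (8 * b ^ 2 * ((d : ℝ) * (d + 1) * (2 * d + 1) / 6)) := by
        gcongr
        exact sqrt_factorial_sq_mul_three_pow_div_le hd
    _ = t ^ 2 / (2 * (2 * d * b ^ 2)) := by field_simp; ring
    _ ≤ t ^ 2 / (2 * ((n : ℝ) / (n / d : ℕ) * b ^ 2)) := by
        refine div_le_div_of_nonneg_left (sq_nonneg t) (by positivity) ?_
        gcongr
        rw [div_le_iff₀ (by exact_mod_cast hm)]
        exact_mod_cast hnm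

section UStatistic

variable {Ω : Type*} [MeasurableSpace Ω] {μ : Measure Ω} {ι : Type*} {d : ℕ}
  {X : ι → Ω → ℝ} {ψ : (Fin d → ℝ) → ℝ}

lemma integral_comp_eq_of_injective (hXmeas : ∀ i, Measurable (X i)) (hindep : iIndepFun X μ)
    (hid : ∀ i j, IdentDistrib (X i) (X j) μ μ) (hψmeas : Measurable ψ) {e e' : Fin d → ι}
    (he : Function.Injective e) (he' : Function.Injective e') :
    ∫ ω, ψ (fun k => X (e k) ω) ∂μ = ∫ ω, ψ (fun k => X (e' k) ω) ∂μ := by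
  have hmeas (e : Fin d → ι) : AEMeasurable (fun ω k => X (e k) ω) μ :=
    (measurable_pi_lambda _ fun k => hXmeas _).aemeasurable
  rw [← integral_map (hmeas e) hψmeas.aestronglyMeasurable,
    ← integral_map (hmeas e') hψmeas.aestronglyMeasurable,
    hindep.map_comp_eq_map_comp hXmeas he he' fun k => (hid _ _).map_eq]

lemma hasSubgaussianMGF_sum_blocks {κ : Type*} [Fintype κ] (hXmeas : ∀ i, Measurable (X i))
    (hindep : iIndepFun X μ) (hψmeas : Measurable ψ) {b : ℝ} (hb : ∀ x, |ψ x| ≤ b)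
    {e : κ → Fin d → ι} (he : Function.Injective fun p : κ × Fin d => e p.1 p.2)
    (hmean : ∀ k, ∫ ω, ψ (fun i => X (e k i) ω) ∂μ = 0) :
    HasSubgaussianMGF (fun ω => ∑ k, ψ (fun i => X (e k i) ω))
      (Fintype.card κ * ‖b‖₊ ^ 2) μ := by
  have := hindep.isProbabilityMeasure
  have hblocks : iIndepFun (fun k ω => ψ (fun i => X (e k i) ω)) μ :=
    ((hindep.precomp he).curry fun _ => hXmeas _).comp (fun _ => ψ) fun _ => hψmeas
  have hψX (k : κ) : Measurable fun ω => ψ (fun i => X (e k i) ω) :=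
    hψmeas.comp (measurable_pi_lambda _ fun i => hXmeas _)
  simpa using HasSubgaussianMGF.sum_of_iIndepFun hblocks (s := univ) (c := fun _ => ‖b‖₊ ^ 2)
    fun k _ => hasSubgaussianMGF_of_abs_le (hψX k).aemeasurable (fun ω => hb _) (hmean k)

end UStatistic

theorem hasSubgaussianMGF_ustat {Ω : Type*} [MeasurableSpace Ω] {μ : Measure Ω} {n d : ℕ}
    (hd : 0 < d) (hdn : d ≤ n) {X : Fin n → Ω → ℝ} {ψ : (Fin d → ℝ) → ℝ}
    (hXmeas : ∀ i, Measurable (X i)) (hindep : iIndepFun X μ)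
    (hid : ∀ i j, IdentDistrib (X i) (X j) μ μ) (hψmeas : Measurable ψ)
    (hsym : ∀ (σ : Equiv.Perm (Fin d)) (x : Fin d → ℝ), ψ (x ∘ σ) = ψ x)
    {b : ℝ} (hb : ∀ x, |ψ x| ≤ b) (hmean : ∫ ω, ψ (fun i => X (Fin.castLE hdn i) ω) ∂μ = 0) :
    HasSubgaussianMGF (fun ω => √n * (n.choose d : ℝ)⁻¹ *
        ∑ f ∈ univ.filter (fun f : Fin d → Fin n => StrictMono f), ψ (fun i => X (f i) ω))
      ((n : ℝ≥0) / (n / d : ℕ) * ‖b‖₊ ^ 2) μ := by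
  set m := n / d
  have hm : 0 < m := Nat.div_pos hdn hd
  have hmd : m * d ≤ n := Nat.div_mul_le_self n d
  set β : Fin m → Fin d → Fin n := fun k i => Fin.castLE hmd (finProdFinEquiv (k, i))
  have hβ : Function.Injective fun p : Fin m × Fin d => β p.1 p.2 :=
    (Fin.castLE_injective hmd).comp finProdFinEquiv.injective
  have hβk (k : Fin m) : Function.Injective (β k) := hβ.comp (Prod.mk_right_injective k)
  have hblock (σ : Equiv.Perm (Fin n)) : HasSubgaussianMGF
      (fun ω => ∑ k, ψ (fun i => X (σ (β k i)) ω)) (m * ‖b‖₊ ^ 2) μ := by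
    simpa using hasSubgaussianMGF_sum_blocks hXmeas hindep hψmeas hb
      (e := fun k i => σ (β k i)) (σ.injective.comp hβ) fun k =>
        (integral_comp_eq_of_injective hXmeas hindep hid hψmeas (σ.injective.comp (hβk k))
          (Fin.castLE_injective hdn)).trans hmean
  have hrep (ω : Ω) : ∑ σ : Equiv.Perm (Fin n), 1 / (n.factorial : ℝ) *
        (√n / m * ∑ k, ψ (fun i => X (σ (β k i)) ω))
      = √n * (n.choose d : ℝ)⁻¹ *
        ∑ f ∈ univ.filter (fun f : Fin d → Fin n => StrictMono f), ψ (fun i => X (f i) ω) := by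
    have h := choose_mul_sum_perm_sum_comp (fun g => ψ (fun i => X (g i) ω))
      (fun g τ => hsym τ fun i => X (g i) ω) hβk
    simp only [Function.comp_apply] at h
    have hC : (n.choose d : ℝ) ≠ 0 := by exact_mod_cast (Nat.choose_pos hdn).ne'
    have hfac : (n.factorial : ℝ) ≠ 0 := by positivity
    rw [← mul_sum, ← mul_sum]
    field_simp
    linear_combination √n * h
  have hconv := HasSubgaussianMGF.sum_mul_of_sum_eq_one (s := univ)
    (w := fun _ => 1 / (n.factorial : ℝ)) (fun _ _ => by positivity)
    (by simp [Fintype.card_perm, (Nat.factorial_pos n).ne'])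
    fun σ _ => (hblock σ).const_mul (√n / m)
  convert hconv using 1
  · exact funext fun ω => (hrep ω).symm
  · ext
    change (n : ℝ) / m * ‖b‖ ^ 2 = (√n / m) ^ 2 * (m * ‖b‖ ^ 2)
    rw [div_pow, sq_sqrt (Nat.cast_nonneg n)]
    field_simp

theorem ustat_concentration_general
    {Ω : Type*} [MeasurableSpace Ω] (μ : Measure Ω) [IsProbabilityMeasure μ]
    (n d : ℕ) (hd : 0 < d) (hdn : d ≤ n)
    (X : Fin n → Ω → ℝ) (hXmeas : ∀ i, Measurable (X i))
    (hindep : iIndepFun X μ)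
    (hid : ∀ i j, IdentDistrib (X i) (X j) μ μ)
    (ψ : (Fin d → ℝ) → ℝ) (hψmeas : Measurable ψ)
    (hsym : ∀ (σ : Equiv.Perm (Fin d)) (x : Fin d → ℝ), ψ (x ∘ σ) = ψ x)
    (b : ℝ) (hb : ∀ x, |ψ x| ≤ b)
    (hmean : ∫ ω, ψ (fun i => X (Fin.castLE hdn i) ω) ∂μ = 0)
    (W : Ω → ℝ)
    (hW : ∀ ω, W ω = Real.sqrt n * ((n.choose d : ℝ))⁻¹ *
      ∑ f ∈ Finset.univ.filter (fun f : Fin d → Fin n => ∀ i j : Fin d, i < j → f i < f j),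
        ψ (fun i => X (f i) ω))
    (t : ℝ) (ht : 0 < t) :
    μ {ω | t ≤ W ω}
        ≤ ENNReal.ofReal (Real.exp (-(t ^ 2 *
            Real.sqrt ((Nat.factorial d : ℝ) ^ 2 * 3 ^ (d - 1) /
              ((d : ℝ) * (d + 1) * (2 * d + 1)) ^ (d - 1)) /
            (8 * b ^ 2 * ((d : ℝ) * (d + 1) * (2 * d + 1) / 6))))) ∧
      μ {ω | W ω ≤ -t}
        ≤ ENNReal.ofReal (Real.exp (-(t ^ 2 *
            Real.sqrt ((Nat.factorial d : ℝ) ^ 2 * 3 ^ (d - 1) /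
              ((d : ℝ) * (d + 1) * (2 * d + 1)) ^ (d - 1)) /
            (8 * b ^ 2 * ((d : ℝ) * (d + 1) * (2 * d + 1) / 6))))) := by
  set c : ℝ≥0 := (n : ℝ≥0) / (n / d : ℕ) * ‖b‖₊ ^ 2
  have hsubG : HasSubgaussianMGF W c μ :=
    (hasSubgaussianMGF_ustat hd hdn hXmeas hindep hid hψmeas hsym hb hmean).congr
      (ae_of_all _ fun ω => (hW ω).symm)
  have hc : (c : ℝ) = n / (n / d : ℕ) * b ^ 2 := by
    simp only [c, NNReal.coe_mul, NNReal.coe_div, NNReal.coe_natCast, NNReal.coe_pow, coe_nnnorm,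
      Real.norm_eq_abs, sq_abs]
  have hexp := ustat_exponent_le hd hdn b t
  rw [← hc] at hexp
  refine ⟨hsubG.measure_ge_le_ofReal_exp ht.le hexp, ?_⟩
  simpa only [Pi.neg_apply, le_neg] using hsubG.neg.measure_ge_le_ofReal_exp ht.le hexp

/-- Concentration of measure for complete nondegenerate U-statistics:
if `ψ` is a symmetric bounded kernel with zero mean on i.i.d. data, then the
standardized U-statistic `W_d = √n (n choose d)⁻¹ Σ_{j₁<⋯<j_d} ψ(X_{j₁},…,X_{j_d})`
has sub-Gaussian tails with explicit constants `γ_d² = d(d+1)(2d+1)/6` and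
`κ_d = (d!)² 3^{d-1}/(d(d+1)(2d+1))^{d-1}`. -/
theorem ustat_concentration
    {Ω : Type*} [MeasurableSpace Ω] (μ : Measure Ω) [IsProbabilityMeasure μ]
    (n d : ℕ) (hd : 0 < d) (hdn : d ≤ n)
    (X : Fin n → Ω → ℝ) (hXmeas : ∀ i, Measurable (X i))
    (hindep : iIndepFun X μ)
    (hid : ∀ i j, IdentDistrib (X i) (X j) μ μ)
    (ψ : (Fin d → ℝ) → ℝ) (hψmeas : Measurable ψ)
    (hsym : ∀ (σ : Equiv.Perm (Fin d)) (x : Fin d → ℝ), ψ (x ∘ σ) = ψ x)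
    (b : ℝ) (hb : ∀ x, |ψ x| ≤ b)
    (hmean : ∫ ω, ψ (fun i => X (Fin.castLE hdn i) ω) ∂μ = 0)
    (hnondeg : μ {ω | (μ[fun ω' => ψ (fun i => X (Fin.castLE hdn i) ω') |
        MeasurableSpace.comap (X (Fin.castLE hdn ⟨0, hd⟩)) inferInstance]) ω = 0} < 1)
    (W : Ω → ℝ)
    (hW : ∀ ω, W ω = Real.sqrt n * ((n.choose d : ℝ))⁻¹ *
      ∑ f ∈ Finset.univ.filter (fun f : Fin d → Fin n => ∀ i j : Fin d, i < j → f i < f j),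
        ψ (fun i => X (f i) ω))
    (t : ℝ) (ht : 0 < t) :
    μ {ω | t ≤ W ω}
        ≤ ENNReal.ofReal (Real.exp (-(t ^ 2 *
            Real.sqrt ((Nat.factorial d : ℝ) ^ 2 * 3 ^ (d - 1) /
              ((d : ℝ) * (d + 1) * (2 * d + 1)) ^ (d - 1)) /
            (8 * b ^ 2 * ((d : ℝ) * (d + 1) * (2 * d + 1) / 6))))) ∧
      μ {ω | W ω ≤ -t}
        ≤ ENNReal.ofReal (Real.exp (-(t ^ 2 *
            Real.sqrt ((Nat.factorial d : ℝ) ^ 2 * 3 ^ (d - 1) /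
              ((d : ℝ) * (d + 1) * (2 * d + 1)) ^ (d - 1)) /
            (8 * b ^ 2 * ((d : ℝ) * (d + 1) * (2 * d + 1) / 6))))) :=
  ustat_concentration_general μ n d hd hdn X hXmeas hindep hid ψ hψmeas hsym b hb hmean W hW t ht
end

section
/- Let x₁,…,x_{n₁} and y₁,…,y_{n₂} (n₁+n₂ = n) be i.i.d. samples from the same continuous distribution (so the rank permutation π is uniform on S_n). With a_{i,j,k,l} as in the MWW construction and W₁ = n^{−3/2} Σ_{s≠t} a_{s,t,π(s),π(t)}, for all t > 0: P(W₁ ≥ t), P(W₁ ≤ −t) ≤ exp(−t²n / (4(2n−1)(6 + 4/n + 1/n²))). -/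
/-! By antisymmetry of the kernel `sign (l - k) / 2`, the double sum over `s < n₁ ≤ t` equals
`∑_{s < n₁} ρ (π s)` with row sums `ρ k = ∑_l sign (l - k) / 2`, which have mean zero and
oscillation at most `n`. So `n^{3/2} W₁` is the sum of a sample drawn without replacement from a
bounded population. Its moment generating function is bounded by induction on the sample size: a
random `(k+1)`-subset is a random point together with a random `k`-subset of the rest, and the
centred increments are handled by `exp x ≤ x + exp (x²)`. This gives
`E exp (λ n^{3/2} W₁) ≤ exp (λ² n³)`, and Chernoff's bound gives the tail bound `exp (-t²/4)`,
which dominates the stated one because `(2n - 1)(6 + 4/n + 1/n²) ≥ n`. -/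

open Finset Equiv
open scoped Pointwise Nat

theorem Real.exp_le_add_exp_sq (x : ℝ) : Real.exp x ≤ x + Real.exp (x ^ 2) := by
  rcases le_or_gt |x| 1 with hx | hx
  · linarith [(abs_le.mp (Real.abs_exp_sub_one_sub_id_le hx)).2, Real.add_one_le_exp (x ^ 2)]
  rcases lt_abs.mp hx with hx | hx
  · nlinarith [Real.exp_le_exp.mpr (show x ≤ x ^ 2 by nlinarith)]
  · nlinarith [Real.exp_le_one_iff.mpr (show x ≤ 0 by linarith), Real.add_one_le_exp (x ^ 2)]

namespace Finset

variable {ι : Type*}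

theorem succ_nsmul_sum_powersetCard_succ {M : Type*} [DecidableEq ι] [AddCommMonoid M]
    (s : Finset ι) (k : ℕ) (g : Finset ι → M) :
    (k + 1) • ∑ T ∈ s.powersetCard (k + 1), g T =
      ∑ i ∈ s, ∑ T ∈ (s.erase i).powersetCard k, g (insert i T) := by
  calc (k + 1) • ∑ T ∈ s.powersetCard (k + 1), g T
      = ∑ T ∈ s.powersetCard (k + 1), ∑ _i ∈ T, g T := by
        rw [smul_sum]
        exact sum_congr rfl fun T hT => by rw [sum_const, (mem_powersetCard.1 hT).2]
    _ = ∑ i ∈ s, ∑ T ∈ s.powersetCard (k + 1) with i ∈ T, g T :=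
        sum_comm' fun T i => by simp only [mem_filter, mem_powersetCard]; grind
    _ = ∑ i ∈ s, ∑ T ∈ (s.erase i).powersetCard k, g (insert i T) := by
        refine sum_congr rfl fun i hi => sum_nbij' (·.erase i) (insert i) ?_ ?_ ?_ ?_ ?_
        · intro T hT
          simp only [mem_filter, mem_powersetCard] at hT ⊢
          exact ⟨erase_subset_erase i hT.1.1, by rw [card_erase_of_mem hT.2, hT.1.2]; rfl⟩
        · intro T hT
          simp only [mem_filter, mem_powersetCard] at hT ⊢
          have hiT : i ∉ T := fun h => (mem_erase.1 (hT.1 h)).1 rfl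
          exact ⟨⟨insert_subset hi (hT.1.trans (erase_subset i s)),
            by rw [card_insert_of_notMem hiT, hT.2]⟩, mem_insert_self i T⟩
        · intro T hT
          exact insert_erase (mem_filter.1 hT).2
        · intro T hT
          exact erase_insert fun h => (mem_erase.1 ((mem_powersetCard.1 hT).1 h)).1 rfl
        · intro T hT
          rw [insert_erase (mem_filter.1 hT).2]

theorem abs_sub_sum_div_card_le {s : Finset ι} {f : ι → ℝ} {R : ℝ}
    (hR : ∀ i ∈ s, ∀ j ∈ s, |f i - f j| ≤ R) {i : ι} (hi : i ∈ s) :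
    |f i - (∑ j ∈ s, f j) / #s| ≤ R := by
  have hs : (0 : ℝ) < #s := by exact_mod_cast card_pos.2 ⟨i, hi⟩
  have hmean : f i - (∑ j ∈ s, f j) / #s = (∑ j ∈ s, (f i - f j)) / #s := by
    rw [sum_sub_distrib, sum_const, nsmul_eq_mul]
    field_simp
  rw [hmean, abs_div, abs_of_pos hs, div_le_iff₀ hs]
  calc |∑ j ∈ s, (f i - f j)| ≤ ∑ j ∈ s, |f i - f j| := abs_sum_le_sum_abs _ _
    _ ≤ ∑ _j ∈ s, R := sum_le_sum fun j hj => hR i hi j hj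
    _ = R * #s := by rw [sum_const, nsmul_eq_mul, mul_comm]

theorem sum_exp_le_card_mul_exp_sq (s : Finset ι) {d : ι → ℝ} {R : ℝ}
    (hsum : ∑ i ∈ s, d i = 0) (hd : ∀ i ∈ s, |d i| ≤ R) :
    ∑ i ∈ s, Real.exp (d i) ≤ #s * Real.exp (R ^ 2) := by
  calc ∑ i ∈ s, Real.exp (d i) ≤ ∑ i ∈ s, (d i + Real.exp (R ^ 2)) := by
        refine sum_le_sum fun i hi => (Real.exp_le_add_exp_sq _).trans ?_
        have hdi := abs_le.1 (hd i hi)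
        exact add_le_add le_rfl (Real.exp_le_exp.2 (sq_le_sq' hdi.1 hdi.2))
    _ = #s * Real.exp (R ^ 2) := by
        rw [sum_add_distrib, hsum, sum_const, nsmul_eq_mul, zero_add]

theorem sum_exp_mul_sub_mean_erase_le [DecidableEq ι] {s : Finset ι} {f : ι → ℝ} {R : ℝ}
    (hR : ∀ i ∈ s, ∀ j ∈ s, |f i - f j| ≤ R) (l : ℝ) {k : ℕ} (hk : k + 1 ≤ #s) :
    ∑ i ∈ s, Real.exp (l * (f i + k * ((∑ j ∈ s.erase i, f j) / #(s.erase i))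
      - (k + 1) * ((∑ j ∈ s, f j) / #s))) ≤ #s * Real.exp (l ^ 2 * R ^ 2) := by
  set μ := (∑ j ∈ s, f j) / #s
  set c : ℝ := 1 - k / (#s - 1)
  have hs : (k : ℝ) + 1 ≤ #s := by exact_mod_cast hk
  have hc : |c| ≤ 1 := by
    have h0 : 0 ≤ (k : ℝ) / (#s - 1) := div_nonneg (Nat.cast_nonneg k) (by linarith)
    have h1 : (k : ℝ) / (#s - 1) ≤ 1 := div_le_one_of_le₀ (by linarith) (by linarith)
    exact abs_le.2 ⟨by linarith, by linarith⟩
  -- Adding `i` to a `k`-subset of `s.erase i`, the recentred increment is `c * (f i - μ)`.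
  have hdev : ∀ i ∈ s, f i + k * ((∑ j ∈ s.erase i, f j) / #(s.erase i)) - (k + 1) * μ =
      c * (f i - μ) := by
    intro i hi
    rcases k.eq_zero_or_pos with rfl | hk0
    · simp [c]
    have hk0 : (1 : ℝ) ≤ k := by exact_mod_cast hk0
    have hs1 : (#s : ℝ) - 1 ≠ 0 := by linarith
    have hs0 : (#s : ℝ) ≠ 0 := by linarith
    rw [sum_erase_eq_sub hi, card_erase_of_mem hi, Nat.cast_sub (one_le_card.2 ⟨i, hi⟩),
      Nat.cast_one]
    simp only [μ, c]
    field_simp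
    ring
  have hsum : ∑ i ∈ s, (f i - μ) = 0 := by
    have hs0 : (#s : ℝ) ≠ 0 := by linarith
    rw [sum_sub_distrib, sum_const, nsmul_eq_mul, mul_div_cancel₀ _ hs0, sub_self]
  rw [sum_congr rfl fun i hi => by rw [hdev i hi]]
  calc ∑ i ∈ s, Real.exp (l * (c * (f i - μ))) ≤ #s * Real.exp ((|l| * R) ^ 2) := by
        refine sum_exp_le_card_mul_exp_sq s ?_ fun i hi => ?_
        · rw [← mul_sum, ← mul_sum, hsum, mul_zero, mul_zero]
        · rw [abs_mul, abs_mul]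
          gcongr
          calc |c| * |f i - μ| ≤ 1 * R := by
                gcongr
                exact abs_sub_sum_div_card_le hR hi
            _ = R := one_mul R
    _ = #s * Real.exp (l ^ 2 * R ^ 2) := by rw [mul_pow, sq_abs]

theorem sum_powersetCard_exp_le [DecidableEq ι] (f : ι → ℝ) {R : ℝ} (l : ℝ) (k : ℕ)
    {s : Finset ι} (hk : k ≤ #s) (hR : ∀ i ∈ s, ∀ j ∈ s, |f i - f j| ≤ R) :
    ∑ T ∈ s.powersetCard k, Real.exp (l * (∑ i ∈ T, f i - k * ((∑ i ∈ s, f i) / #s)))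
      ≤ (#s).choose k * Real.exp (l ^ 2 * k * R ^ 2) := by
  induction k generalizing s with
  | zero => simp
  | succ k ih =>
    set μ := (∑ i ∈ s, f i) / #s
    set μ' : ι → ℝ := fun i => (∑ j ∈ s.erase i, f j) / #(s.erase i)
    have hIH : ∀ i ∈ s, ∑ T ∈ (s.erase i).powersetCard k,
        Real.exp (l * (∑ j ∈ T, f j - k * μ' i)) ≤
          (#s - 1).choose k * Real.exp (l ^ 2 * k * R ^ 2) := fun i hi =>
      (ih (by rw [card_erase_of_mem hi]; omega) fun x hx y hy =>
        hR x (mem_of_mem_erase hx) y (mem_of_mem_erase hy)).trans_eq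
        (by rw [card_erase_of_mem hi])
    have hinsert : ∀ i ∈ s, ∀ T ∈ (s.erase i).powersetCard k,
        Real.exp (l * (∑ j ∈ insert i T, f j - (k + 1) * μ)) =
          Real.exp (l * (f i + k * μ' i - (k + 1) * μ)) *
            Real.exp (l * (∑ j ∈ T, f j - k * μ' i)) := by
      intro i hi T hT
      rw [sum_insert fun h => notMem_erase i s ((mem_powersetCard.1 hT).1 h), ← Real.exp_add]
      ring_nf
    have hchoose : (#s : ℝ) * (#s - 1).choose k = (#s).choose (k + 1) * (k + 1) := by
      have := Nat.add_one_mul_choose_eq (#s - 1) k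
      rw [Nat.sub_add_cancel (by omega)] at this
      exact_mod_cast this
    push_cast
    refine le_of_mul_le_mul_left ?_ (by positivity : (0 : ℝ) < k + 1)
    calc (k + 1 : ℝ) * ∑ T ∈ s.powersetCard (k + 1),
          Real.exp (l * (∑ i ∈ T, f i - (k + 1) * μ))
        = ∑ i ∈ s, ∑ T ∈ (s.erase i).powersetCard k,
            Real.exp (l * (∑ j ∈ insert i T, f j - (k + 1) * μ)) := by
          rw [← Nat.cast_add_one, ← nsmul_eq_mul]
          exact succ_nsmul_sum_powersetCard_succ s k _
      _ = ∑ i ∈ s, Real.exp (l * (f i + k * μ' i - (k + 1) * μ)) *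
            ∑ T ∈ (s.erase i).powersetCard k, Real.exp (l * (∑ j ∈ T, f j - k * μ' i)) := by
          simp_rw [mul_sum]
          exact sum_congr rfl fun i hi => sum_congr rfl (hinsert i hi)
      _ ≤ ∑ i ∈ s, Real.exp (l * (f i + k * μ' i - (k + 1) * μ)) *
            ((#s - 1).choose k * Real.exp (l ^ 2 * k * R ^ 2)) := by
          gcongr with i hi
          exact hIH i hi
      _ ≤ #s * Real.exp (l ^ 2 * R ^ 2) *
            ((#s - 1).choose k * Real.exp (l ^ 2 * k * R ^ 2)) := by
          rw [← sum_mul]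
          gcongr
          exact sum_exp_mul_sub_mean_erase_le hR l hk
      _ = (k + 1) * ((#s).choose (k + 1) * Real.exp (l ^ 2 * (k + 1) * R ^ 2)) := by
          rw [mul_mul_mul_comm, hchoose, ← Real.exp_add]
          ring_nf

theorem sum_sum_eq_zero_of_antisymm (s : Finset ι) {h : ι → ι → ℝ}
    (hh : ∀ i j, h i j = -h j i) : ∑ i ∈ s, ∑ j ∈ s, h i j = 0 := by
  have hswap : ∑ i ∈ s, ∑ j ∈ s, h i j = -∑ i ∈ s, ∑ j ∈ s, h i j := by
    conv_lhs => rw [sum_comm]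
    simp only [← sum_neg_distrib]
    exact sum_congr rfl fun i _ => sum_congr rfl fun j _ => hh j i
  linarith

theorem sum_sum_compl_eq_sum_sum_univ_of_antisymm [Fintype ι] [DecidableEq ι]
    {h : ι → ι → ℝ} (hh : ∀ i j, h i j = -h j i) (A : Finset ι) :
    ∑ i ∈ A, ∑ j ∈ Aᶜ, h i j = ∑ i ∈ A, ∑ j, h i j := by
  simp_rw [← sum_add_sum_compl A (h _), sum_add_distrib, sum_sum_eq_zero_of_antisymm A hh,
    zero_add]

end Finset

namespace Equiv.Perm

variable {α : Type*} [Fintype α] [DecidableEq α]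

theorem card_filter_smul_finset_eq (A : Finset α) {T : Finset α} (hT : #T = #A) :
    #{p : Perm α | p • A = T} = #{p : Perm α | p • A = A} := by
  have := Set.powersetCard.isPretransitive (α := α) (n := #A)
  obtain ⟨τ, hτ⟩ := MulAction.exists_smul_eq (Perm α)
    (⟨T, hT⟩ : Set.powersetCard α #A) ⟨A, rfl⟩
  replace hτ : τ • T = A := by simpa using congrArg Subtype.val hτ
  refine card_nbij' (τ * ·) (τ⁻¹ * ·) ?_ ?_ ?_ ?_ <;> intro p hp
  · simp only [coe_filter, mem_univ, true_and, Set.mem_ofPred_eq] at hp ⊢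
    rw [mul_smul, hp, hτ]
  · simp only [coe_filter, mem_univ, true_and, Set.mem_ofPred_eq] at hp ⊢
    rw [mul_smul, hp, ← hτ, inv_smul_smul]
  · exact inv_mul_cancel_left τ p
  · exact mul_inv_cancel_left τ p

theorem choose_card_nsmul_sum_smul_finset {M : Type*} [AddCommMonoid M] (A : Finset α)
    (g : Finset α → M) :
    (Fintype.card α).choose #A • ∑ p : Perm α, g (p • A) =
      (Fintype.card α)! • ∑ T ∈ univ.powersetCard #A, g T := by
  have hmaps : ∀ p ∈ (univ : Finset (Perm α)), p • A ∈ univ.powersetCard #A := fun p _ =>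
    mem_powersetCard.2 ⟨subset_univ _, card_smul_finset p A⟩
  have hfiber : ∀ T ∈ univ.powersetCard #A,
      #{p : Perm α | p • A = T} = #{p : Perm α | p • A = A} :=
    fun T hT => card_filter_smul_finset_eq A (mem_powersetCard.1 hT).2
  have hsum : ∑ p : Perm α, g (p • A) =
      #{p : Perm α | p • A = A} • ∑ T ∈ univ.powersetCard #A, g T := by
    rw [← sum_fiberwise_of_maps_to hmaps, smul_sum]
    refine sum_congr rfl fun T hT => ?_
    rw [sum_congr rfl fun p hp => by rw [(mem_filter.1 hp).2], sum_const, hfiber T hT]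
  have hcard : #{p : Perm α | p • A = A} * (Fintype.card α).choose #A = (Fintype.card α)! := by
    rw [← Fintype.card_perm, ← card_univ (α := Perm α), card_eq_sum_card_fiberwise hmaps,
      sum_congr rfl hfiber, sum_const, card_powersetCard, card_univ, smul_eq_mul, mul_comm]
  rw [hsum, smul_smul, mul_comm, hcard]

theorem sum_exp_sum_apply_le (f : α → ℝ) {R : ℝ} (hR : ∀ i j, |f i - f j| ≤ R)
    (A : Finset α) (l : ℝ) :
    ∑ p : Perm α, Real.exp (l * (∑ s ∈ A, f (p s) - #A * ((∑ i, f i) / Fintype.card α))) ≤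
      (Fintype.card α)! * Real.exp (l ^ 2 * #A * R ^ 2) := by
  set g : Finset α → ℝ := fun T =>
    Real.exp (l * (∑ i ∈ T, f i - #A * ((∑ i, f i) / Fintype.card α)))
  have himage : ∀ p : Perm α, ∑ s ∈ A, f (p s) = ∑ i ∈ p • A, f i := fun p => by
    rw [smul_finset_def, sum_image fun x _ y _ h => MulAction.injective p h]
    rfl
  have hchoose : (0 : ℝ) < (Fintype.card α).choose #A := by
    exact_mod_cast Nat.choose_pos (card_le_univ A)
  have hcount := choose_card_nsmul_sum_smul_finset A g
  rw [nsmul_eq_mul, nsmul_eq_mul] at hcount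
  have hbound := sum_powersetCard_exp_le f l #A (s := univ) (card_le_univ A)
    fun i _ j _ => hR i j
  rw [card_univ] at hbound
  rw [sum_congr rfl fun p _ => by rw [himage p]]
  refine le_of_mul_le_mul_left ?_ hchoose
  calc ((Fintype.card α).choose #A : ℝ) * ∑ p : Perm α, g (p • A)
      = (Fintype.card α)! * ∑ T ∈ univ.powersetCard #A, g T := hcount
    _ ≤ (Fintype.card α)! * ((Fintype.card α).choose #A * Real.exp (l ^ 2 * #A * R ^ 2)) := by
      gcongr
    _ = _ := by ring

theorem sum_exp_sum_sum_compl_le {h : α → α → ℝ} (hh : ∀ x y, h x y = -h y x) {b : ℝ}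
    (hb : ∀ x y, |h x y| ≤ b) (A : Finset α) (l : ℝ) :
    ∑ p : Perm α, Real.exp (l * ∑ s ∈ A, ∑ t ∈ Aᶜ, h (p s) (p t)) ≤
      (Fintype.card α)! * Real.exp (l ^ 2 * #A * (2 * Fintype.card α * b) ^ 2) := by
  set ρ : α → ℝ := fun x => ∑ y, h x y
  have hρ : ∀ x, |ρ x| ≤ Fintype.card α * b := fun x =>
    (abs_sum_le_sum_abs _ _).trans <| (sum_le_sum fun y _ => hb x y).trans_eq <| by
      rw [sum_const, card_univ, nsmul_eq_mul]
  have hstat : ∀ p : Perm α, ∑ s ∈ A, ∑ t ∈ Aᶜ, h (p s) (p t) =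
      ∑ s ∈ A, ρ (p s) - #A * ((∑ x, ρ x) / Fintype.card α) := fun p => by
    rw [sum_sum_eq_zero_of_antisymm univ hh, zero_div, mul_zero, sub_zero,
      sum_sum_compl_eq_sum_sum_univ_of_antisymm (fun s t => hh (p s) (p t))]
    exact sum_congr rfl fun s _ => Equiv.sum_comp p (h (p s))
  simp_rw [hstat]
  refine sum_exp_sum_apply_le ρ (fun x y => ?_) A l
  calc |ρ x - ρ y| ≤ |ρ x| + |ρ y| := abs_sub _ _
    _ ≤ 2 * Fintype.card α * b := by linarith [hρ x, hρ y]

end Equiv.Perm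

theorem card_filter_le_div_card_le_exp {α : Type*} [Fintype α] (g : α → ℝ) {D s : ℝ}
    (hD : 0 < D) (hs : 0 ≤ s)
    (hmgf : ∀ l, ∑ x, Real.exp (l * g x) ≤ Fintype.card α * Real.exp (l ^ 2 * D)) :
    (#{x | s ≤ g x} : ℝ) / Fintype.card α ≤ Real.exp (-(s ^ 2 / (4 * D))) := by
  set l := s / (2 * D)
  have hl : 0 ≤ l := by positivity
  refine div_le_of_le_mul₀ (Nat.cast_nonneg _) (Real.exp_pos _).le ?_
  calc (#{x | s ≤ g x} : ℝ) = ∑ x with s ≤ g x, 1 := by rw [sum_const, nsmul_one]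
    _ ≤ ∑ x with s ≤ g x, Real.exp (l * (g x - s)) :=
      sum_le_sum fun x hx => Real.one_le_exp (mul_nonneg hl (sub_nonneg.2 (mem_filter.1 hx).2))
    _ ≤ ∑ x, Real.exp (l * (g x - s)) :=
      sum_le_sum_of_subset_of_nonneg (filter_subset _ _) fun _ _ _ => (Real.exp_pos _).le
    _ = (∑ x, Real.exp (l * g x)) * Real.exp (-(l * s)) := by
      rw [sum_mul]
      exact sum_congr rfl fun x _ => by rw [← Real.exp_add]; ring_nf
    _ ≤ Fintype.card α * Real.exp (l ^ 2 * D) * Real.exp (-(l * s)) := by gcongr; exact hmgf l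
    _ = Real.exp (l ^ 2 * D + -(l * s)) * Fintype.card α := by rw [Real.exp_add]; ring
    _ = Real.exp (-(s ^ 2 / (4 * D))) * Fintype.card α := by
      congr 2
      simp only [l]
      field_simp
      ring

theorem card_filter_le_neg_div_card_le_exp {α : Type*} [Fintype α] (g : α → ℝ) {D s : ℝ}
    (hD : 0 < D) (hs : 0 ≤ s)
    (hmgf : ∀ l, ∑ x, Real.exp (l * g x) ≤ Fintype.card α * Real.exp (l ^ 2 * D)) :
    (#{x | g x ≤ -s} : ℝ) / Fintype.card α ≤ Real.exp (-(s ^ 2 / (4 * D))) := by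
  simp only [le_neg (a := g _)]
  exact card_filter_le_div_card_le_exp (fun x => -g x) hD hs fun l => by
    simpa only [mul_neg, neg_mul, neg_sq] using hmgf (-l)

noncomputable def mwwKernel {β : Type*} [LinearOrder β] (k l : β) : ℝ :=
  if k < l then 1 / 2 else if l < k then -(1 / 2) else 0

theorem mwwKernel_antisymm {β : Type*} [LinearOrder β] (k l : β) :
    mwwKernel k l = -mwwKernel l k := by
  rcases lt_trichotomy k l with h | rfl | h
  · simp [mwwKernel, h, h.not_gt]
  · simp [mwwKernel]
  · simp [mwwKernel, h, h.not_gt]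

theorem abs_mwwKernel_le {β : Type*} [LinearOrder β] (k l : β) : |mwwKernel k l| ≤ 1 / 2 := by
  unfold mwwKernel
  split_ifs <;> norm_num

theorem sum_exp_sum_sum_compl_mwwKernel_le {n : ℕ} (A : Finset (Fin n)) (l : ℝ) :
    ∑ p : Perm (Fin n), Real.exp (l * ∑ s ∈ A, ∑ t ∈ Aᶜ, mwwKernel (p s) (p t)) ≤
      Fintype.card (Perm (Fin n)) * Real.exp (l ^ 2 * n ^ 3) := by
  refine (Perm.sum_exp_sum_sum_compl_le mwwKernel_antisymm abs_mwwKernel_le A l).trans ?_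
  have hA : (#A : ℝ) ≤ n := by exact_mod_cast (card_le_univ A).trans_eq (Fintype.card_fin n)
  rw [Fintype.card_perm, Fintype.card_fin]
  refine mul_le_mul_of_nonneg_left (Real.exp_le_exp.2 ?_) (by positivity)
  calc l ^ 2 * #A * (2 * n * (1 / 2)) ^ 2 = l ^ 2 * n ^ 2 * #A := by ring
    _ ≤ l ^ 2 * n ^ 2 * n := by gcongr
    _ = l ^ 2 * n ^ 3 := by ring

theorem sum_sum_sdiff_singleton_eq_mwwKernel {n n₁ : ℕ}
    {a : Fin n → Fin n → Fin n → Fin n → ℝ}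
    (ha : ∀ i j k l, a i j k l =
      if (i : ℕ) < n₁ ∧ n₁ ≤ (j : ℕ) ∧ k < l then 1 / 2
      else if (i : ℕ) < n₁ ∧ n₁ ≤ (j : ℕ) ∧ l < k then -(1 / 2) else 0)
    (p : Perm (Fin n)) :
    ∑ s, ∑ t ∈ univ \ {s}, a s t (p s) (p t) =
      ∑ s ∈ ({s | (s : ℕ) < n₁} : Finset (Fin n)),
        ∑ t ∈ ({s | (s : ℕ) < n₁} : Finset (Fin n))ᶜ, mwwKernel (p s) (p t) := by
  set A : Finset (Fin n) := {s | (s : ℕ) < n₁}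
  have ha' : ∀ s t, a s t (p s) (p t) =
      if s ∈ A then (if t ∈ Aᶜ then mwwKernel (p s) (p t) else 0) else 0 := by
    intro s t
    simp only [A, mem_compl, mem_filter, mem_univ, true_and, ha, mwwKernel]
    by_cases hs : (s : ℕ) < n₁
    · rcases lt_or_ge (t : ℕ) n₁ with ht | ht
      · simp [hs, ht, ht.not_ge]
      · simp [hs, ht, ht.not_gt]
    · simp [hs]
  have hdiag : ∀ s, ∑ t ∈ univ \ {s}, a s t (p s) (p t) = ∑ t, a s t (p s) (p t) := fun s => by
    rw [sdiff_singleton_eq_erase]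
    refine sum_erase univ ?_
    rw [ha']
    by_cases hs : s ∈ A <;> simp [hs]
  simp only [hdiag]
  simp only [ha', sum_ite_irrel, sum_const_zero, Fintype.sum_ite_mem]

theorem mww_exponent_le {n : ℕ} (hn : 1 ≤ n) (t : ℝ) :
    t ^ 2 * n / (4 * (2 * n - 1) * (6 + 4 / n + 1 / (n : ℝ) ^ 2)) ≤
      (t * (n * √n)) ^ 2 / (4 * n ^ 3) := by
  have hn : (1 : ℝ) ≤ n := by exact_mod_cast hn
  have hX : (n : ℝ) ≤ (2 * n - 1) * (6 + 4 / n + 1 / n ^ 2) := by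
    have : (0 : ℝ) ≤ 4 / n + 1 / n ^ 2 := by positivity
    nlinarith
  rw [mul_pow, mul_pow, Real.sq_sqrt (by positivity), mul_assoc 4]
  calc t ^ 2 * n / (4 * ((2 * n - 1) * (6 + 4 / n + 1 / n ^ 2))) ≤ t ^ 2 * n / (4 * n) := by
        gcongr
    _ = t ^ 2 * (n ^ 2 * n) / (4 * n ^ 3) := by field_simp

theorem mww_concentration_general (n₁ n : ℕ) (hn1 : 1 ≤ n)
    (a : Fin n → Fin n → Fin n → Fin n → ℝ)
    (ha : ∀ i j k l, a i j k l =
      if (i : ℕ) < n₁ ∧ n₁ ≤ (j : ℕ) ∧ k < l then 1 / 2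
      else if (i : ℕ) < n₁ ∧ n₁ ≤ (j : ℕ) ∧ l < k then -(1 / 2) else 0)
    (W : Equiv.Perm (Fin n) → ℝ)
    (hW : ∀ p : Equiv.Perm (Fin n),
      W p = ((n : ℝ) * Real.sqrt n)⁻¹ * ∑ s, ∑ t ∈ univ \ {s}, a s t (p s) (p t))
    (t : ℝ) (ht : 0 < t) :
    ((univ.filter (fun p : Equiv.Perm (Fin n) => t ≤ W p)).card : ℝ) /
        (Fintype.card (Equiv.Perm (Fin n)))
      ≤ Real.exp (-(t ^ 2 * n /
          (4 * (2 * (n : ℝ) - 1) * (6 + 4 / n + 1 / (n : ℝ) ^ 2)))) ∧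
    ((univ.filter (fun p : Equiv.Perm (Fin n) => W p ≤ -t)).card : ℝ) /
        (Fintype.card (Equiv.Perm (Fin n)))
      ≤ Real.exp (-(t ^ 2 * n /
          (4 * (2 * (n : ℝ) - 1) * (6 + 4 / n + 1 / (n : ℝ) ^ 2)))) := by
  set A : Finset (Fin n) := {s | (s : ℕ) < n₁}
  set S : Perm (Fin n) → ℝ := fun p => ∑ s ∈ A, ∑ t ∈ Aᶜ, mwwKernel (p s) (p t)
  have hscale : 0 < (n : ℝ) * √n := by positivity
  have hWS : ∀ p, W p = S p / (n * √n) := fun p => by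
    rw [hW, sum_sum_sdiff_singleton_eq_mwwKernel ha, inv_mul_eq_div]
  have hD : (0 : ℝ) < n ^ 3 := by positivity
  have hs : 0 ≤ t * (n * √n) := by positivity
  have hmgf := sum_exp_sum_sum_compl_mwwKernel_le A
  have hrate := Real.exp_le_exp.2 (neg_le_neg (mww_exponent_le hn1 t))
  simp only [hWS, le_div_iff₀ hscale, div_le_iff₀ hscale, neg_mul]
  exact ⟨(card_filter_le_div_card_le_exp S hD hs hmgf).trans hrate,
    (card_filter_le_neg_div_card_le_exp S hD hs hmgf).trans hrate⟩

/-- Concentration for the centered Mann-Whitney-Wilcoxon statistic: with the MWW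
array `a` (bounded by `b = 1/2`) and a uniformly random rank permutation `π`,
`W₁ = n^{-3/2} Σ_{s≠t} a_{s,t,π(s),π(t)}` satisfies
`P(W₁ ≥ t), P(W₁ ≤ -t) ≤ exp(-t²n/(4(2n-1)(6 + 4/n + 1/n²)))`. -/
theorem mww_concentration (n₁ n₂ n : ℕ) (hn : n = n₁ + n₂) (hn1 : 1 ≤ n)
    (a : Fin n → Fin n → Fin n → Fin n → ℝ)
    (ha : ∀ i j k l, a i j k l =
      if (i : ℕ) < n₁ ∧ n₁ ≤ (j : ℕ) ∧ k < l then 1 / 2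
      else if (i : ℕ) < n₁ ∧ n₁ ≤ (j : ℕ) ∧ l < k then -(1 / 2) else 0)
    (W : Equiv.Perm (Fin n) → ℝ)
    (hW : ∀ p : Equiv.Perm (Fin n),
      W p = ((n : ℝ) * Real.sqrt n)⁻¹ * ∑ s, ∑ t ∈ univ \ {s}, a s t (p s) (p t))
    (t : ℝ) (ht : 0 < t) :
    ((univ.filter (fun p : Equiv.Perm (Fin n) => t ≤ W p)).card : ℝ) /
        (Fintype.card (Equiv.Perm (Fin n)))
      ≤ Real.exp (-(t ^ 2 * n /
          (4 * (2 * (n : ℝ) - 1) * (6 + 4 / n + 1 / (n : ℝ) ^ 2)))) ∧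
    ((univ.filter (fun p : Equiv.Perm (Fin n) => W p ≤ -t)).card : ℝ) /
        (Fintype.card (Equiv.Perm (Fin n)))
      ≤ Real.exp (-(t ^ 2 * n /
          (4 * (2 * (n : ℝ) - 1) * (6 + 4 / n + 1 / (n : ℝ) ^ 2)))) :=
  mww_concentration_general n₁ n hn1 a ha W hW t ht
end

section
/- Let G₁ = (V, E₁) and G₂ = (V, E₂) be graphs on vertex set {1,…,n}, π uniform on S_n, and V₁ = Σ_{s≠t} 1((s,t) ∈ E₁) 1((π(s),π(t)) ∈ E₂). Then E(V₁) = 4|E₁||E₂|/(n(n−1)), and for all t > 0, P(n^{−3/2}(V₁ − 4|E₁||E₂|/(n(n−1))) ≥ t) ≤ exp(−nt² / (64(2n−1)(6 + 4/n + 1/n²))), with the same bound for the lower tail. -/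
/-!
If exchanging two values of a permutation changes `f` by at most `D`, then `f` concentrates
under a uniform random permutation of `α`: reveal the permutation one point at a time through
`Perm (Option α) ≃ Option α × Perm α`. Conditioned on the image of the new point, the mean of `f`
moves by at most `D`, so Hoeffding's lemma bounds the outer average and induction the inner
ones, giving `𝔼 exp (l f) ≤ exp (l 𝔼 f + |α| D² l² / 2)` and, by Chernoff, a tail
`exp (-u² / (2 |α| D²))`.

The overlap statistic `V₁` has `D = 4n`: exchanging two values only affects the pairs meeting
them. Its mean comes from the transitivity of `S_n` on ordered pairs of distinct vertices. With
`u = t n^{3/2}` the tail is `exp (-t² / 32)`, and `32 n ≤ 64 (2n - 1) (6 + 4/n + 1/n²)`.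
-/

open Finset Real
open scoped BigOperators Classical

open MeasureTheory ProbabilityTheory in
theorem Fintype.expect_exp_mul_le_of_mem_Icc {ι : Type*} [Fintype ι] [Nonempty ι] {y : ι → ℝ}
    {a b : ℝ} (hy : ∀ i, y i ∈ Set.Icc a b) (l : ℝ) :
    𝔼 i, exp (l * y i) ≤ exp (l * 𝔼 i, y i + (b - a) ^ 2 * l ^ 2 / 8) := by
  let _ : MeasurableSpace ι := ⊤
  let μ := (PMF.uniformOfFintype ι).toMeasure
  have hμ (g : ι → ℝ) : ∫ i, g i ∂μ = 𝔼 i, g i := by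
    simp [μ, PMF.integral_eq_sum, PMF.uniformOfFintype_apply, Fintype.expect_eq_sum_div_card,
      div_eq_inv_mul, mul_sum]
  have hoeffding := (hasSubgaussianMGF_of_mem_Icc (μ := μ) (measurable_of_countable y).aemeasurable
    (ae_of_all _ hy)).mgf_le l
  simp only [mgf, hμ, NNReal.coe_pow, NNReal.coe_div, coe_nnnorm, norm_eq_abs, sq_abs, div_pow,
    NNReal.coe_ofNat] at hoeffding
  calc 𝔼 i, exp (l * y i) = exp (l * 𝔼 i, y i) * 𝔼 i, exp (l * (y i - 𝔼 j, y j)) := by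
        rw [mul_expect]
        refine expect_congr rfl fun i _ => ?_
        rw [← exp_add]
        ring_nf
    _ ≤ exp (l * 𝔼 i, y i) * exp ((b - a) ^ 2 / 2 ^ 2 * l ^ 2 / 2) := by gcongr
    _ = exp (l * 𝔼 i, y i + (b - a) ^ 2 * l ^ 2 / 8) := by
        rw [← exp_add]
        ring_nf

theorem Fintype.card_filter_le_div_card_le_expect_exp {ι : Type*} [Fintype ι] (g : ι → ℝ) {l : ℝ}
    (hl : 0 ≤ l) (c : ℝ) :
    (#{i | c ≤ g i} : ℝ) / Fintype.card ι ≤ 𝔼 i, exp (l * (g i - c)) := by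
  rw [natCast_card_filter, Fintype.expect_eq_sum_div_card]
  gcongr with i
  split_ifs with h
  · exact one_le_exp (mul_nonneg hl (sub_nonneg.mpr h))
  · exact (exp_pos _).le

theorem abs_sum_sum_sub_sum_sum_le {ι : Type*} [Fintype ι] (F F' : ι → ι → ℝ) (S : Finset ι)
    (h_eq : ∀ s t, s ∉ S → t ∉ S → F s t = F' s t) (h_le : ∀ s t, |F s t - F' s t| ≤ 1) :
    |∑ s, ∑ t, F s t - ∑ s, ∑ t, F' s t| ≤ 2 * #S * Fintype.card ι := by
  have h s t : |F s t - F' s t| ≤ (if s ∈ S then 1 else 0) + (if t ∈ S then 1 else 0) := by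
    by_cases hs : s ∈ S
    · simpa [hs] using (h_le s t).trans (le_add_of_nonneg_right (by split_ifs <;> norm_num))
    by_cases ht : t ∈ S
    · simpa [hs, ht] using h_le s t
    · simp [hs, ht, h_eq s t hs ht]
  calc |∑ s, ∑ t, F s t - ∑ s, ∑ t, F' s t| = |∑ s, ∑ t, (F s t - F' s t)| := by
        simp only [sum_sub_distrib]
    _ ≤ ∑ s, ∑ t, |F s t - F' s t| :=
        (abs_sum_le_sum_abs _ _).trans (sum_le_sum fun s _ => abs_sum_le_sum_abs _ _)
    _ ≤ ∑ s : ι, ∑ t : ι, ((if s ∈ S then 1 else 0) + (if t ∈ S then 1 else 0)) :=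
        sum_le_sum fun s _ => sum_le_sum fun t _ => h s t
    _ = 2 * #S * Fintype.card ι := by
        simp [sum_add_distrib]
        ring

namespace Equiv.Perm

variable {α β : Type*} [DecidableEq α] {D : ℝ} {f : Perm α → ℝ}

theorem exists_apply_eq_and_apply_eq {s t s' t' : α} (hst : s ≠ t) (hst' : s' ≠ t') :
    ∃ σ : Perm α, σ s' = s ∧ σ t' = t := by
  set w := swap s' s
  have hw : w t' ≠ s := by
    rw [← swap_apply_left s' s]
    exact w.injective.ne hst'.symm
  refine ⟨swap (w t') t * w, ?_, swap_apply_left _ _⟩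
  rw [mul_apply, swap_apply_left, swap_apply_of_ne_of_ne hw.symm hst]

/-- `f` is `D`-Lipschitz for the transposition (Cayley) distance on `Perm α`. -/
def SwapLipschitzWith (D : ℝ) (f : Perm α → ℝ) : Prop :=
  ∀ (p : Perm α) (x y : α), |f (p * swap x y) - f p| ≤ D

namespace SwapLipschitzWith

theorem abs_swap_mul_sub_le (hf : SwapLipschitzWith D f) (p : Perm α) (x y : α) :
    |f (swap x y * p) - f p| ≤ D := by
  rw [swap_mul_eq_mul_swap]
  exact hf _ _ _

theorem neg (hf : SwapLipschitzWith D f) : SwapLipschitzWith D (-f) := by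
  intro p x y
  rw [Pi.neg_apply, Pi.neg_apply, neg_sub_neg, abs_sub_comm]
  exact hf p x y

theorem comp_permCongr [DecidableEq β] {f : Perm β → ℝ} (hf : SwapLipschitzWith D f)
    (e : α ≃ β) : SwapLipschitzWith D (fun p => f (e.permCongr p)) := by
  intro p x y
  have h : e.permCongr (swap x y) = swap (e x) (e y) := by
    rw [permCongr_def, symm_trans_swap_trans]
  simpa only [permCongr_mul, h] using hf (e.permCongr p) (e x) (e y)

theorem comp_mul_optionCongr {f : Perm (Option α) → ℝ} (hf : SwapLipschitzWith D f)
    (q : Perm (Option α)) : SwapLipschitzWith D (fun σ : Perm α => f (q * optionCongr σ)) := by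
  intro σ x y
  have h : optionCongr (σ * swap x y) = optionCongr σ * swap (some x) (some y) := by
    rw [mul_def, mul_def, optionCongr_trans, optionCongr_swap]
  simpa only [h, mul_assoc] using hf (q * optionCongr σ) (some x) (some y)

end SwapLipschitzWith

variable [Fintype α]

theorem expect_apply_apply_eq (F : α → α → ℝ) {s t s' t' : α} (hst : s ≠ t) (hst' : s' ≠ t') :
    𝔼 p : Perm α, F (p s) (p t) = 𝔼 p : Perm α, F (p s') (p t') := by
  obtain ⟨σ, hs, ht⟩ := exists_apply_eq_and_apply_eq hst hst'
  exact Fintype.expect_equiv (Equiv.mulRight σ) _ _ fun p => by simp [hs, ht]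

theorem expect_eq_expect_expect_swap_none_mul_optionCongr (φ : Perm (Option α) → ℝ) :
    𝔼 p, φ p = 𝔼 j, 𝔼 σ : Perm α, φ (swap none j * optionCongr σ) := by
  rw [← Fintype.expect_equiv decomposeOption.symm (fun x => φ (decomposeOption.symm x)) φ
    (fun _ => rfl), ← univ_product_univ, expect_product]
  rfl

theorem SwapLipschitzWith.expect_exp_mul_le_option {f : Perm (Option α) → ℝ}
    (hf : SwapLipschitzWith D f) (l : ℝ)
    (ih : ∀ g : Perm α → ℝ, SwapLipschitzWith D g →
      𝔼 σ, exp (l * g σ) ≤ exp (l * 𝔼 σ, g σ + Fintype.card α * D ^ 2 * l ^ 2 / 2)) :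
    𝔼 p, exp (l * f p) ≤ exp (l * 𝔼 p, f p + Fintype.card (Option α) * D ^ 2 * l ^ 2 / 2) := by
  set G : Option α → ℝ := fun j => 𝔼 σ, f (swap none j * optionCongr σ)
  set c := 𝔼 σ : Perm α, f (optionCongr σ)
  have hG (j : Option α) : G j ∈ Set.Icc (c - D) (c + D) := by
    have h σ := abs_le.mp (hf.abs_swap_mul_sub_le (optionCongr σ) none j)
    constructor
    · calc c - D = 𝔼 σ : Perm α, (f (optionCongr σ) - D) := by
            rw [expect_sub_distrib, Fintype.expect_const]
        _ ≤ G j := expect_le_expect fun σ _ => by linarith [(h σ).1]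
    · calc G j ≤ 𝔼 σ : Perm α, (f (optionCongr σ) + D) :=
            expect_le_expect fun σ _ => by linarith [(h σ).2]
        _ = c + D := by rw [expect_add_distrib, Fintype.expect_const]
  have hmean : 𝔼 j, G j = 𝔼 p, f p := (expect_eq_expect_expect_swap_none_mul_optionCongr f).symm
  calc 𝔼 p, exp (l * f p)
      = 𝔼 j, 𝔼 σ : Perm α, exp (l * f (swap none j * optionCongr σ)) :=
        expect_eq_expect_expect_swap_none_mul_optionCongr _
    _ ≤ 𝔼 j, exp (l * G j + Fintype.card α * D ^ 2 * l ^ 2 / 2) :=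
        expect_le_expect fun j _ => ih _ (hf.comp_mul_optionCongr _)
    _ = (𝔼 j, exp (l * G j)) * exp (Fintype.card α * D ^ 2 * l ^ 2 / 2) := by
        simp only [exp_add, expect_mul]
    _ ≤ exp (l * 𝔼 j, G j + ((c + D) - (c - D)) ^ 2 * l ^ 2 / 8) *
          exp (Fintype.card α * D ^ 2 * l ^ 2 / 2) := by
        gcongr
        exact Fintype.expect_exp_mul_le_of_mem_Icc hG l
    _ = exp (l * 𝔼 p, f p + Fintype.card (Option α) * D ^ 2 * l ^ 2 / 2) := by
        rw [hmean, ← exp_add, Fintype.card_option]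
        push_cast
        ring_nf

theorem SwapLipschitzWith.expect_exp_mul_le (hf : SwapLipschitzWith D f) (l : ℝ) :
    𝔼 p, exp (l * f p) ≤ exp (l * 𝔼 p, f p + Fintype.card α * D ^ 2 * l ^ 2 / 2) := by
  refine Fintype.induction_empty_option (P := fun α _ => ∀ [DecidableEq α] (f : Perm α → ℝ),
      SwapLipschitzWith D f →
        𝔼 p, exp (l * f p) ≤ exp (l * 𝔼 p, f p + Fintype.card α * D ^ 2 * l ^ 2 / 2))
    ?_ ?_ ?_ α f hf
  · intro α β _ e ih _ f hf
    let _ := Fintype.ofEquiv β e.symm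
    let _ := Classical.decEq α
    have h := ih _ (hf.comp_permCongr e)
    rwa [Fintype.card_congr e, Fintype.expect_equiv e.permCongr _ (fun p => exp (l * f p))
      (fun _ => rfl), Fintype.expect_equiv e.permCongr _ f (fun _ => rfl)] at h
  · intro _ f _
    simp
  · intro α _ ih _ f hf
    let _ := Classical.decEq α
    obtain rfl : ‹DecidableEq (Option α)› = fun a b => Option.instDecidableEq a b :=
      Subsingleton.elim _ _
    exact hf.expect_exp_mul_le_option l ih

theorem SwapLipschitzWith.card_ge_le (hf : SwapLipschitzWith D f) {u : ℝ} (hu : 0 ≤ u) :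
    (#{p | 𝔼 q, f q + u ≤ f p} : ℝ) / Fintype.card (Perm α) ≤
      exp (-(u ^ 2 / (2 * Fintype.card α * D ^ 2))) := by
  set μ := 𝔼 q, f q
  set l := u / (Fintype.card α * D ^ 2)
  calc (#{p | μ + u ≤ f p} : ℝ) / Fintype.card (Perm α)
      ≤ 𝔼 p, exp (l * (f p - (μ + u))) :=
        Fintype.card_filter_le_div_card_le_expect_exp f (by positivity) _
    _ = exp (-(l * (μ + u))) * 𝔼 p, exp (l * f p) := by
        rw [mul_expect]
        refine expect_congr rfl fun p _ => ?_
        rw [← exp_add]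
        ring_nf
    _ ≤ exp (-(l * (μ + u))) * exp (l * μ + Fintype.card α * D ^ 2 * l ^ 2 / 2) := by
        gcongr
        exact hf.expect_exp_mul_le l
    _ = exp (-(u ^ 2 / (2 * Fintype.card α * D ^ 2))) := by
        rw [← exp_add]
        congr 1
        rcases eq_or_ne (Fintype.card α * D ^ 2 : ℝ) 0 with hv | hv
        · simp [l, hv, mul_assoc]
        · simp only [l]
          field_simp
          ring

theorem SwapLipschitzWith.card_le_le (hf : SwapLipschitzWith D f) {u : ℝ} (hu : 0 ≤ u) :
    (#{p | f p ≤ 𝔼 q, f q - u} : ℝ) / Fintype.card (Perm α) ≤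
      exp (-(u ^ 2 / (2 * Fintype.card α * D ^ 2))) := by
  convert hf.neg.card_ge_le hu using 5 with p
  simp only [Pi.neg_apply, expect_neg_distrib]
  constructor <;> intro h <;> linarith

end Equiv.Perm

namespace SimpleGraph

variable {V : Type*} [Fintype V]

theorem sum_sum_adj_eq (G : SimpleGraph V) [DecidableRel G.Adj] :
    ∑ s, ∑ t, (if G.Adj s t then (1 : ℝ) else 0) = 2 * #G.edgeFinset := by
  simp only [sum_boole, ← neighborFinset_eq_filter, card_neighborFinset_eq_degree]
  exact_mod_cast sum_degrees_eq_twice_card_edges G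

variable [DecidableEq V]

theorem sum_offDiag_perm_adj_eq (G : SimpleGraph V) [DecidableRel G.Adj] (p : Equiv.Perm V) :
    ∑ x ∈ univ.offDiag, (if G.Adj (p x.1) (p x.2) then (1 : ℝ) else 0) = 2 * #G.edgeFinset := by
  rw [← sum_sum_adj_eq G, sum_subset (s₂ := univ ×ˢ univ) (fun _ _ => mem_product.2
    ⟨mem_univ _, mem_univ _⟩) fun x _ hx => ?_, sum_product]
  · exact (sum_congr rfl fun s _ => Equiv.sum_comp p _).trans
      (Equiv.sum_comp p fun s => ∑ t, if G.Adj s t then (1 : ℝ) else 0)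
  · have : x.1 = x.2 := by simpa using hx
    simp [this]

theorem expect_perm_adj_of_ne (G : SimpleGraph V) [DecidableRel G.Adj] {s t : V} (hst : s ≠ t) :
    𝔼 p : Equiv.Perm V, (if G.Adj (p s) (p t) then (1 : ℝ) else 0) =
      2 * #G.edgeFinset / (Fintype.card V * (Fintype.card V - 1)) := by
  have hpairs : (#(univ : Finset V).offDiag : ℝ) = Fintype.card V * (Fintype.card V - 1) := by
    rw [offDiag_card, Nat.cast_sub (Nat.le_mul_self _), card_univ]
    push_cast
    ring
  have hne : (#(univ : Finset V).offDiag : ℝ) ≠ 0 := by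
    exact_mod_cast (Finset.nonempty_of_ne_empty (s := univ.offDiag) (by
      simpa [Finset.eq_empty_iff_forall_notMem] using ⟨s, t, hst⟩)).card_pos.ne'
  rw [← hpairs, eq_div_iff hne]
  calc (𝔼 p : Equiv.Perm V, if G.Adj (p s) (p t) then (1 : ℝ) else 0) * #univ.offDiag
      = ∑ x ∈ univ.offDiag, 𝔼 p : Equiv.Perm V, (if G.Adj (p x.1) (p x.2) then (1 : ℝ) else 0) := by
        rw [mul_comm, ← nsmul_eq_mul, ← sum_const]
        exact sum_congr rfl fun x hx => Equiv.Perm.expect_apply_apply_eq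
          (fun a b => if G.Adj a b then (1 : ℝ) else 0) hst (mem_offDiag.mp hx).2.2
    _ = 2 * #G.edgeFinset := by
        rw [← expect_sum_comm]
        simp only [sum_offDiag_perm_adj_eq, Fintype.expect_const]

variable (G₁ G₂ : SimpleGraph V) [DecidableRel G₁.Adj] [DecidableRel G₂.Adj]

def dartOverlap (p : Equiv.Perm V) : ℝ :=
  ∑ s, ∑ t, (if G₁.Adj s t then 1 else 0) * (if G₂.Adj (p s) (p t) then 1 else 0)

theorem sum_sdiff_singleton_eq_dartOverlap (p : Equiv.Perm V) :
    ∑ s, ∑ t ∈ univ \ {s},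
      (if G₁.Adj s t then (1 : ℝ) else 0) * (if G₂.Adj (p s) (p t) then 1 else 0) =
      dartOverlap G₁ G₂ p :=
  sum_congr rfl fun s _ => by rw [sdiff_singleton_eq_erase, sum_erase _ (by simp)]

theorem expect_dartOverlap :
    𝔼 p, dartOverlap G₁ G₂ p =
      4 * #G₁.edgeFinset * #G₂.edgeFinset / (Fintype.card V * (Fintype.card V - 1)) := by
  simp only [dartOverlap, expect_sum_comm, ← mul_expect]
  calc ∑ s, ∑ t, (if G₁.Adj s t then (1 : ℝ) else 0) *
        𝔼 p : Equiv.Perm V, (if G₂.Adj (p s) (p t) then 1 else 0)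
      = ∑ s, ∑ t, (if G₁.Adj s t then (1 : ℝ) else 0) *
          (2 * #G₂.edgeFinset / (Fintype.card V * (Fintype.card V - 1))) := by
        refine sum_congr rfl fun s _ => sum_congr rfl fun t _ => ?_
        split_ifs with h
        · rw [expect_perm_adj_of_ne G₂ h.ne]
        · simp
    _ = 4 * #G₁.edgeFinset * #G₂.edgeFinset / (Fintype.card V * (Fintype.card V - 1)) := by
        simp only [← sum_mul, sum_sum_adj_eq]
        ring

theorem swapLipschitzWith_dartOverlap :
    Equiv.Perm.SwapLipschitzWith (4 * Fintype.card V) (dartOverlap G₁ G₂) := by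
  intro p a b
  refine (abs_sum_sum_sub_sum_sum_le _ _ {a, b} (fun s t hs ht => ?_) fun s t => ?_).trans ?_
  · simp only [mem_insert, mem_singleton, not_or] at hs ht
    simp only [Equiv.Perm.mul_apply, Equiv.swap_apply_of_ne_of_ne hs.1 hs.2,
      Equiv.swap_apply_of_ne_of_ne ht.1 ht.2]
  · split_ifs <;> norm_num
  · have : (#({a, b} : Finset V) : ℝ) ≤ 2 := by exact_mod_cast card_le_two
    gcongr
    linarith

end SimpleGraph

theorem tail_exponent_le {n : ℝ} (hn : 1 ≤ n) (t : ℝ) :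
    exp (-((n * √n * t) ^ 2 / (2 * n * (4 * n) ^ 2))) ≤
      exp (-(n * t ^ 2 / (64 * (2 * n - 1) * (6 + 4 / n + 1 / n ^ 2)))) := by
  have h2n : 0 < 2 * n - 1 := by linarith
  have hq : 32 * n ≤ 64 * (2 * n - 1) * (6 + 4 / n + 1 / n ^ 2) := by
    have : 0 ≤ 4 / n + 1 / n ^ 2 := by positivity
    nlinarith
  rw [exp_le_exp, neg_le_neg_iff, mul_pow, mul_pow, sq_sqrt (by positivity),
    div_le_div_iff₀ (by positivity) (by positivity)]
  nlinarith [mul_le_mul_of_nonneg_left hq (by positivity : 0 ≤ n ^ 3 * t ^ 2)]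

/-- Concentration for the random intersection of two graphs: with `π` uniform on `S_n`
and `V₁ = Σ_{s≠t} 1((s,t) ∈ E₁) 1((π(s),π(t)) ∈ E₂)`, the mean of `V₁` is
`4|E₁||E₂|/(n(n-1))` and `n^{-3/2}(V₁ - 4|E₁||E₂|/(n(n-1)))` has sub-Gaussian tails. -/
theorem graph_intersection_concentration (n : ℕ) (hn : 2 ≤ n)
    (G₁ G₂ : SimpleGraph (Fin n)) [DecidableRel G₁.Adj] [DecidableRel G₂.Adj]
    (V : Equiv.Perm (Fin n) → ℝ)
    (hV : ∀ p : Equiv.Perm (Fin n),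
      V p = ∑ s, ∑ t ∈ univ \ {s},
        (if G₁.Adj s t then (1 : ℝ) else 0) * (if G₂.Adj (p s) (p t) then 1 else 0))
    (t : ℝ) (ht : 0 < t) :
    (∑ p : Equiv.Perm (Fin n), V p) / (Fintype.card (Equiv.Perm (Fin n)))
        = 4 * (G₁.edgeFinset.card : ℝ) * (G₂.edgeFinset.card : ℝ) /
            ((n : ℝ) * ((n : ℝ) - 1)) ∧
    ((univ.filter (fun p : Equiv.Perm (Fin n) =>
          t ≤ ((n : ℝ) * Real.sqrt n)⁻¹ * (V p -
            4 * (G₁.edgeFinset.card : ℝ) * (G₂.edgeFinset.card : ℝ) /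
              ((n : ℝ) * ((n : ℝ) - 1))))).card : ℝ) /
        (Fintype.card (Equiv.Perm (Fin n)))
      ≤ Real.exp (-((n : ℝ) * t ^ 2 /
          (64 * (2 * (n : ℝ) - 1) * (6 + 4 / n + 1 / (n : ℝ) ^ 2)))) ∧
    ((univ.filter (fun p : Equiv.Perm (Fin n) =>
          ((n : ℝ) * Real.sqrt n)⁻¹ * (V p -
            4 * (G₁.edgeFinset.card : ℝ) * (G₂.edgeFinset.card : ℝ) /
              ((n : ℝ) * ((n : ℝ) - 1))) ≤ -t)).card : ℝ) /
        (Fintype.card (Equiv.Perm (Fin n)))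
      ≤ Real.exp (-((n : ℝ) * t ^ 2 /
          (64 * (2 * (n : ℝ) - 1) * (6 + 4 / n + 1 / (n : ℝ) ^ 2)))) := by
  obtain rfl : V = SimpleGraph.dartOverlap G₁ G₂ :=
    funext fun p => (hV p).trans (SimpleGraph.sum_sdiff_singleton_eq_dartOverlap G₁ G₂ p)
  have hmean := SimpleGraph.expect_dartOverlap G₁ G₂
  have hf := SimpleGraph.swapLipschitzWith_dartOverlap G₁ G₂
  have hc : 0 < (n : ℝ) * √n := by positivity
  simp only [Fintype.card_fin] at hmean hf
  have hupper := hf.card_ge_le (u := n * √n * t) (mul_pos hc ht).le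
  have hlower := hf.card_le_le (u := n * √n * t) (mul_pos hc ht).le
  simp only [Fintype.card_fin, hmean] at hupper hlower
  have hexp := tail_exponent_le (n := n) (by exact_mod_cast (by omega : 1 ≤ n)) t
  refine ⟨by rw [← Fintype.expect_eq_sum_div_card, hmean], ?_, ?_⟩
  · refine (le_of_eq ?_).trans (hupper.trans hexp)
    congr 3
    refine filter_congr fun p _ => ?_
    rw [inv_mul_eq_div, le_div_iff₀ hc]
    constructor <;> intro h <;> linarith
  · refine (le_of_eq ?_).trans (hlower.trans hexp)
    congr 3
    refine filter_congr fun p _ => ?_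
    rw [inv_mul_eq_div, div_le_iff₀ hc]
    constructor <;> intro h <;> linarith
end
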